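/- arXiv:1512.08299 — 7 statements merged into one kernel-verified Lean document; each statement's English description precedes it below -/
import Mathlib

section
/- For δ=1, Menger's theorem holds in any time-varying graph: the maximum number of 1-disjoint journeys from s to d equals the minimum number of 1-removals (single-contact deletions) needed to make d unreachable from s. -/
/-- A time-varying graph: finite edge set, discrete time span `{1,...,T}`,
edge-presence function `ρ`. Unit edge-traversal delay is built into journeys. -/
structure TVG (V : Type) where
  E : Finset (V × V)
  T : ℕ
  ρ : V × V → ℕ → Bool

variable {V : Type}

/-- A contact: edge `e` is present at slot `t ∈ {1,...,T}`. -/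
def TVG.Contact (G : TVG V) (e : V × V) (t : ℕ) : Prop :=
  e ∈ G.E ∧ 1 ≤ t ∧ t ≤ G.T ∧ G.ρ e t = true

/-- A journey from `s` to `d`: a nonempty time-respecting sequence of contacts
(unit edge delay, strictly increasing slots, completed by slot `T`). -/
structure TVG.Journey (G : TVG V) (s d : V) where
  contacts : List ((V × V) × ℕ)
  ne : contacts ≠ []
  starts : (contacts.head ne).1.1 = s
  ends : (contacts.getLast ne).1.2 = d
  valid : ∀ c ∈ contacts, G.Contact c.1 c.2
  chain : List.Chain' (fun c₁ c₂ => c₁.1.2 = c₂.1.1 ∧ c₁.2 < c₂.2) contacts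

/-- Journey `J` uses edge `e` at slot `t`. -/
def TVG.Journey.uses {G : TVG V} {s d : V} (J : G.Journey s d) (e : V × V) (t : ℕ) : Prop :=
  (e, t) ∈ J.contacts

/-- Two journeys are `δ`-disjoint: they never use the same edge within `δ` slots. -/
def DeltaDisjoint {G : TVG V} {s d : V} (δ : ℕ) (J₁ J₂ : G.Journey s d) : Prop :=
  ∀ e t₁ t₂, J₁.uses e t₁ → J₂.uses e t₂ → δ ≤ Nat.dist t₁ t₂

/-- There exist `m` pairwise `δ`-disjoint journeys from `s` to `d`. -/
def HasDisjointJourneys (G : TVG V) (s d : V) (δ m : ℕ) : Prop :=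
  ∃ Js : Fin m → G.Journey s d, ∀ i j, i ≠ j → DeltaDisjoint δ (Js i) (Js j)

/-- A removal/failure of edge `e` during slots `[t₀, t₀ + dur - 1]` kills contact `c`. -/
def Kills (e : V × V) (t₀ dur : ℕ) (c : (V × V) × ℕ) : Prop :=
  c.1 = e ∧ t₀ ≤ c.2 ∧ c.2 < t₀ + dur

/-- `F` is a set of heads of `δ`-removals whose application leaves no `s`-`d` journey. -/
def IsCutSet (G : TVG V) (s d : V) (δ : ℕ) (F : Finset ((V × V) × ℕ)) : Prop :=
  ∀ J : G.Journey s d, ∃ c ∈ J.contacts, ∃ f ∈ F, Kills f.1 f.2 δ c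

/-- `MaxFlow_δ`: the maximum number of pairwise `δ`-disjoint `s`-`d` journeys. -/
noncomputable def maxFlow (G : TVG V) (s d : V) (δ : ℕ) : ℕ :=
  sSup {m | HasDisjointJourneys G s d δ m}

/-- `MinCut_δ`: the minimum number of `δ`-removals rendering `d` unreachable from `s`. -/
noncomputable def minCut (G : TVG V) (s d : V) (δ : ℕ) : ℕ :=
  sInf {k | ∃ F : Finset ((V × V) × ℕ), F.card = k ∧ IsCutSet G s d δ F}

/-- `(n,δ)`-survivability of the pair `(s,d)`: after any `n` failures, each disabling
one edge for at most `δ` consecutive slots, `d` remains reachable from `s`. -/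
def Survivable (G : TVG V) (s d : V) (n δ : ℕ) : Prop :=
  ∀ F : Finset ((V × V) × ℕ × ℕ), F.card ≤ n → (∀ f ∈ F, f.2.2 ≤ δ) →
    ∃ J : G.Journey s d, ∀ c ∈ J.contacts, ∀ f ∈ F, ¬ Kills f.1 f.2.1 f.2.2 c

/-!
With `δ = 1` a removal deletes a single contact and `1`-disjoint journeys are journeys with no
common contact. So in the *contact graph*, whose vertices are the contacts and whose arcs are the
time-respecting successions `(e, t) → (e', t')` (head of `e` = tail of `e'`, `t < t'`), journeys
are exactly the walks from the contacts leaving `s` to the contacts entering `d`, cuts are vertex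
separators and flows are vertex-disjoint walks: the theorem is Menger's theorem for this finite
digraph.

Menger's theorem is proved by induction on the number of arcs. Let every `A`–`B` separator have
at least `k` vertices and pick an arc `e = (x, y)`. If `E - e` has no smaller separator,
induction applies. Otherwise `E - e` has a separator `S'` with `|S'| < k`; then `S' + x` and
`S' + y` separate `A` from `B` in `E`, so both have exactly `k` vertices and, by induction in
`E - e`, are joined to `A`, resp. `B`, by `k` disjoint walks (the second family is found in
the reversed digraph). Cut at their first (resp. last) vertex in `S' + x` (resp. `S' + y`), a
walk of the first kind meets one of the second kind only at a common end in `S'`; so they join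
up, through `e` at `x`, into `k` disjoint `A`–`B` walks.
-/

open Finset Function

namespace Menger

variable {α : Type*} {E F : Finset (α × α)} {A A' B B' X Y S S' : Finset α}
  {l p r : List α} {x y v : α} {e : α × α}

structure IsWalk (E : Finset (α × α)) (A B : Finset α) (l : List α) : Prop where
  isChain : l.IsChain fun a b => (a, b) ∈ E
  head?_mem : ∃ a ∈ A, l.head? = some a
  getLast?_mem : ∃ b ∈ B, l.getLast? = some b

def Separates (E : Finset (α × α)) (A B S : Finset α) : Prop :=
  ∀ l, IsWalk E A B l → ∃ v ∈ l, v ∈ S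

theorem _root_.List.exists_eq_append_cons_of_exists_mem {P : α → Prop} (h : ∃ v ∈ l, P v) :
    ∃ p v t, l = p ++ v :: t ∧ P v ∧ ∀ u ∈ p, ¬ P u := by
  classical
  obtain ⟨v, hv⟩ := Option.isSome_iff_exists.1
    ((List.find?_isSome (p := fun u => decide (P u))).2 (by simpa using h))
  obtain ⟨hvP, p, t, rfl, hp⟩ := List.find?_eq_some_iff_append.1 hv
  exact ⟨p, v, t, rfl, by simpa using hvP, fun u hu => by simpa using hp u hu⟩

namespace IsWalk

theorem mono (h : IsWalk E A B l) (hE : E ⊆ F) (hA : A ⊆ A') (hB : B ⊆ B') :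
    IsWalk F A' B' l := by
  obtain ⟨hc, ⟨a, ha, hla⟩, ⟨b, hb, hlb⟩⟩ := h
  exact ⟨hc.imp fun _ _ h => hE h, ⟨a, hA ha, hla⟩, ⟨b, hB hb, hlb⟩⟩

theorem exists_mem_right (h : IsWalk E A B l) : ∃ b ∈ l, b ∈ B := by
  obtain ⟨b, hb, hlb⟩ := h.getLast?_mem
  exact ⟨b, List.mem_of_getLast? hlb, hb⟩

theorem of_prefix (h : IsWalk E A B l) (hp : p ++ [v] <+: l) : IsWalk E A {v} (p ++ [v]) := by
  obtain ⟨t, rfl⟩ := hp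
  obtain ⟨hc, ⟨a, ha, hla⟩, -⟩ := h
  refine ⟨hc.left_of_append, ⟨a, ha, ?_⟩,
    ⟨v, mem_singleton_self v, List.getLast?_concat⟩⟩
  simpa using hla

theorem of_suffix (h : IsWalk E A B l) (hr : v :: r <:+ l) : IsWalk E {v} B (v :: r) := by
  obtain ⟨t, rfl⟩ := hr
  obtain ⟨hc, -, ⟨b, hb, hlb⟩⟩ := h
  refine ⟨hc.right_of_append, ⟨v, mem_singleton_self v, rfl⟩, ⟨b, hb, ?_⟩⟩
  simpa using hlb

theorem append_cons (h₁ : IsWalk E A X (p ++ [x])) (h₂ : IsWalk E Y B (x :: r)) :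
    IsWalk E A B (p ++ x :: r) := by
  obtain ⟨hc₁, ⟨a, ha, hla⟩, -⟩ := h₁
  obtain ⟨hc₂, -, ⟨b, hb, hlb⟩⟩ := h₂
  refine ⟨by simpa using hc₁.append_overlap (l₃ := r) hc₂ (List.cons_ne_nil x []),
    ⟨a, ha, ?_⟩, ⟨b, hb, ?_⟩⟩
  · simpa using hla
  · simpa using hlb

theorem cons (hxy : (x, y) ∈ E) (hx : x ∈ A) (h : IsWalk E Y B (y :: r)) :
    IsWalk E A B (x :: y :: r) := by
  obtain ⟨hc, -, ⟨b, hb, hlb⟩⟩ := h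
  exact ⟨hc.cons_cons hxy, ⟨x, hx, rfl⟩, ⟨b, hb, by simpa using hlb⟩⟩

theorem exists_prefix (h : IsWalk E A B l) (hS : ∃ v ∈ l, v ∈ S) :
    ∃ p x, p ++ [x] <+: l ∧ (∀ u ∈ p, u ∉ S) ∧ x ∈ S ∧ IsWalk E A S (p ++ [x]) := by
  obtain ⟨p, x, t, rfl, hx, hp⟩ := List.exists_eq_append_cons_of_exists_mem hS
  have hpre : p ++ [x] <+: p ++ x :: t := ⟨t, by simp⟩
  exact ⟨p, x, hpre, hp, hx,
    (h.of_prefix hpre).mono subset_rfl subset_rfl (singleton_subset_iff.2 hx)⟩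

end IsWalk

theorem isWalk_singleton (hA : v ∈ A) (hB : v ∈ B) : IsWalk E A B [v] :=
  ⟨List.isChain_singleton v, ⟨v, hA, rfl⟩, ⟨v, hB, rfl⟩⟩

theorem exists_disjoint_walks_of_le_card {W : α → List α} (hW : ∀ x ∈ X, IsWalk E A B (W x))
    (hd : (X : Set α).Pairwise (List.Disjoint on W)) {k : ℕ} (hk : k ≤ #X) :
    ∃ W' : Fin k → List α,
      (∀ i, IsWalk E A B (W' i)) ∧ Pairwise (List.Disjoint on W') := by
  obtain ⟨f⟩ : Nonempty (Fin k ↪ X) := Function.Embedding.nonempty_of_card_le (by simpa)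
  exact ⟨fun i => W (f i), fun i => hW _ (f i).2,
    fun i j hij => hd (f i).2 (f j).2 fun h => hij (f.injective (Subtype.ext h))⟩

theorem card_le_of_separates {k : ℕ} {W : Fin k → List α} (hW : ∀ i, IsWalk E A B (W i))
    (hd : Pairwise (List.Disjoint on W)) (hS : Separates E A B S) : k ≤ #S := by
  choose v hv hvS using fun i => hS _ (hW i)
  have hinj : Injective v := fun i j h => by_contra fun hne => hd hne (hv i) (h ▸ hv j)
  simpa using card_le_card_of_injOn (s := univ) v (fun i _ => hvS i) hinj.injOn

/-- Splicing the two walks at a common vertex gives an `A`–`B` walk in `F`, which can only meet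
`S'` at the splice point. -/
theorem Separates.eq_of_mem_of_mem (hS' : Separates F A B S') (hX : S' ⊆ X) (hY : S' ⊆ Y)
    (hp : IsWalk F A X (p ++ [x])) (hpX : ∀ u ∈ p, u ∉ X)
    (hr : IsWalk F Y B (y :: r)) (hrY : ∀ u ∈ r, u ∉ Y)
    (hvp : v ∈ p ++ [x]) (hvr : v ∈ y :: r) : x = y ∧ x ∈ S' := by
  obtain ⟨p₁, p₂, hp₁⟩ := List.append_of_mem hvp
  obtain ⟨r₁, r₂, hr₁⟩ := List.append_of_mem hvr
  have hp₁p : p₁ ⊆ p := by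
    have := congrArg List.dropLast hp₁
    rw [List.dropLast_concat, List.dropLast_append_cons] at this
    rw [this]
    exact List.subset_append_left _ _
  have hr₂r : r₂ ⊆ r := by cases r₁ <;> simp_all [List.subset_def]
  have hw₁ : IsWalk F A {v} (p₁ ++ [v]) := hp.of_prefix ⟨p₂, by simp [hp₁]⟩
  have hw₂ : IsWalk F {v} B (v :: r₂) := hr.of_suffix ⟨r₁, hr₁.symm⟩
  obtain ⟨u, hu, huS'⟩ := hS' _ (hw₁.append_cons hw₂)
  have hvS' : v ∈ S' := by
    rw [List.mem_append, List.mem_cons] at hu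
    rcases hu with hu | rfl | hu
    · exact absurd (hX huS') (hpX u (hp₁p hu))
    · exact huS'
    · exact absurd (hY huS') (hrY u (hr₂r hu))
  have hvx : v = x := by
    rcases List.mem_append.1 hvp with hv | hv
    · exact absurd (hX hvS') (hpX v hv)
    · exact List.mem_singleton.1 hv
  have hvy : v = y := by
    rcases List.mem_cons.1 hvr with hv | hv
    · exact hv
    · exact absurd (hY hvS') (hrY v hv)
  exact ⟨hvx ▸ hvy, hvx ▸ hvS'⟩

variable [DecidableEq α]

theorem separates_empty_inter : Separates ∅ A B (A ∩ B) := by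
  rintro (_ | ⟨a, _ | ⟨b, t⟩⟩) ⟨hc, ⟨a', ha, hla⟩, ⟨b', hb, hlb⟩⟩
  · simp at hla
  · simp only [List.head?_cons, List.getLast?_singleton, Option.some.injEq] at hla hlb
    subst hla hlb
    exact ⟨a, List.mem_singleton_self a, mem_inter.2 ⟨ha, hb⟩⟩
  · simp at hc

theorem IsWalk.erase (h : IsWalk E A B l) (he : e.1 ∉ l.dropLast) :
    IsWalk (E.erase e) A B l := by
  refine ⟨?_, h.head?_mem, h.getLast?_mem⟩
  rw [List.isChain_iff_forall_rel_of_append_cons_cons]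
  rintro a b l₁ l₂ rfl
  refine mem_erase.2 ⟨fun hab => he ?_,
    List.isChain_iff_forall_rel_of_append_cons_cons.1 h.isChain rfl⟩
  simp [← hab]

theorem image_swap_image_swap (E : Finset (α × α)) :
    (E.image Prod.swap).image Prod.swap = E := by
  simp [image_image]

theorem image_swap_erase (E : Finset (α × α)) (e : α × α) :
    (E.erase e).image Prod.swap = (E.image Prod.swap).erase e.swap :=
  image_erase Prod.swap_injective E e

theorem IsWalk.reverse (h : IsWalk E A B l) : IsWalk (E.image Prod.swap) B A l.reverse := by
  obtain ⟨hc, ⟨a, ha, hla⟩, ⟨b, hb, hlb⟩⟩ := h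
  refine ⟨List.isChain_reverse.2 (hc.imp fun a b h => mem_image.2 ⟨(a, b), h, rfl⟩),
    ⟨b, hb, by simpa using hlb⟩, ⟨a, ha, by simpa using hla⟩⟩

theorem IsWalk.of_image_swap (h : IsWalk (E.image Prod.swap) B A l) :
    IsWalk E A B l.reverse := by
  simpa only [image_swap_image_swap] using h.reverse

theorem separates_image_swap_iff :
    Separates (E.image Prod.swap) B A S ↔ Separates E A B S := by
  refine ⟨fun h l hl => by simpa using h _ hl.reverse, fun h l hl => ?_⟩
  simpa using h l.reverse hl.of_image_swap

namespace Separates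

theorem insert_fst (h : Separates (E.erase e) A B S) : Separates E A B (insert e.1 S) := by
  intro l hl
  by_cases he : e.1 ∈ l
  · exact ⟨e.1, he, mem_insert_self _ _⟩
  · obtain ⟨v, hv, hvS⟩ := h l (hl.erase fun h => he (List.dropLast_subset l h))
    exact ⟨v, hv, mem_insert_of_mem hvS⟩

theorem insert_snd (h : Separates (E.erase e) A B S) : Separates E A B (insert e.2 S) := by
  rw [← separates_image_swap_iff] at h ⊢
  rw [image_swap_erase] at h
  exact insert_fst (e := e.swap) h

theorem of_separates_insert_fst (hS' : Separates (E.erase e) A B S')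
    (hS : Separates (E.erase e) A (insert e.1 S') S) : Separates E A B S := by
  intro l hl
  obtain ⟨p, x, hpre, hp, -, hw⟩ := hl.exists_prefix (hS'.insert_fst l hl)
  obtain ⟨v, hv, hvS⟩ := hS _ (hw.erase fun h => hp _ (by simpa using h) (mem_insert_self _ _))
  exact ⟨v, hpre.subset hv, hvS⟩

theorem of_separates_insert_snd (hS' : Separates (E.erase e) A B S')
    (hS : Separates ((E.erase e).image Prod.swap) B (insert e.2 S') S) : Separates E A B S := by
  rw [← separates_image_swap_iff, image_swap_erase] at hS'
  rw [image_swap_erase] at hS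
  rw [← separates_image_swap_iff]
  exact of_separates_insert_fst (e := e.swap) hS' hS

end Separates

/-- The walk to `x ∈ X` is `p x ++ [x]`: disjoint `A`–`X` walks, one ending at each vertex
of `X` and meeting `X` nowhere else. -/
structure IsLinkage (F : Finset (α × α)) (A X : Finset α) (p : α → List α) : Prop where
  isWalk : ∀ x ∈ X, IsWalk F A X (p x ++ [x])
  notMem : ∀ x ∈ X, ∀ u ∈ p x, u ∉ X
  pairwise_disjoint : (X : Set α).Pairwise (List.Disjoint on fun x => p x ++ [x])

theorem exists_isLinkage {k : ℕ} {P : Fin k → List α} (hP : ∀ i, IsWalk F A X (P i))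
    (hd : Pairwise (List.Disjoint on P)) (hX : #X ≤ k) : ∃ p, IsLinkage F A X p := by
  choose q x hpre hq hxX hw using fun i => (hP i).exists_prefix (hP i).exists_mem_right
  have hsub : ∀ i, q i ++ [x i] ⊆ P i := fun i => (hpre i).subset
  have hlast : ∀ i, x i ∈ P i := fun i => hsub i (by simp)
  have hinj : Injective x := fun i j hij => by_contra fun hne => hd hne (hlast i) (hij ▸ hlast j)
  have himage : univ.image x = X := eq_of_subset_of_card_le
    (fun _ h => by obtain ⟨i, -, rfl⟩ := mem_image.1 h; exact hxX i)
    (by rw [card_image_of_injective _ hinj, card_univ, Fintype.card_fin]; exact hX)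
  have hX : ∀ y ∈ X, ∃ i, x i = y := fun y hy => by
    rw [← himage] at hy
    simpa using hy
  refine ⟨extend x q fun _ => [], ⟨fun y hy => ?_, fun y hy => ?_, fun y hy z hz hyz => ?_⟩⟩
  · obtain ⟨i, rfl⟩ := hX y hy
    simpa [hinj.extend_apply] using hw i
  · obtain ⟨i, rfl⟩ := hX y hy
    simpa [hinj.extend_apply] using hq i
  · obtain ⟨i, rfl⟩ := hX y hy
    obtain ⟨j, rfl⟩ := hX z hz
    simp only [onFun, hinj.extend_apply]
    exact fun v hvi hvj => hd (fun h => hyz (congrArg x h)) (hsub i hvi) (hsub j hvj)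

variable {p r : α → List α}

theorem IsLinkage.isWalk_reverse (hr : IsLinkage (F.image Prod.swap) B Y r) (hy : y ∈ Y) :
    IsWalk F Y B (y :: (r y).reverse) := by
  simpa using (hr.isWalk y hy).of_image_swap

def join (e : α × α) (p r : α → List α) (x : α) : List α :=
  p x ++ x :: if x = e.1 then e.2 :: (r e.2).reverse else (r x).reverse

theorem mem_join (hv : v ∈ join e p r x) :
    v ∈ p x ++ [x] ∨ v ∈ r (if x = e.1 then e.2 else x) ++ [if x = e.1 then e.2 else x] := by
  unfold join at hv
  split_ifs at hv ⊢ <;> simp at hv ⊢ <;> tauto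

theorem isWalk_join (he : e ∈ E) (hp : IsLinkage (E.erase e) A (insert e.1 S') p)
    (hr : IsLinkage ((E.erase e).image Prod.swap) B (insert e.2 S') r)
    (hx : x ∈ insert e.1 S') : IsWalk E A B (join e p r x) := by
  have hQ := (hp.isWalk x hx).mono (erase_subset e E) subset_rfl subset_rfl
  unfold join
  split_ifs with h
  · have hR := (hr.isWalk_reverse (mem_insert_self e.2 S')).mono (erase_subset e E) subset_rfl
      subset_rfl
    exact hQ.append_cons (hR.cons (h ▸ he) (mem_singleton_self x))
  · have hxS' : x ∈ insert e.2 S' := mem_insert_of_mem ((mem_insert.1 hx).resolve_left h)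
    exact hQ.append_cons ((hr.isWalk_reverse hxS').mono (erase_subset e E) subset_rfl subset_rfl)

theorem pairwise_disjoint_join (hS' : Separates (E.erase e) A B S') (he₂ : e.2 ∉ S')
    (hp : IsLinkage (E.erase e) A (insert e.1 S') p)
    (hr : IsLinkage ((E.erase e).image Prod.swap) B (insert e.2 S') r) :
    ((insert e.1 S' : Finset α) : Set α).Pairwise (List.Disjoint on join e p r) := by
  set φ : α → α := fun x => if x = e.1 then e.2 else x
  have hφ : ∀ x ∈ insert e.1 S', φ x ∈ insert e.2 S' := by
    intro x hx
    by_cases h : x = e.1 <;> simp_all [φ]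
  have hφinj : ∀ x ∈ insert e.1 S', ∀ x' ∈ insert e.1 S', φ x = φ x' → x = x' := by
    intro x hx x' hx' h
    by_cases h₁ : x = e.1 <;> by_cases h₂ : x' = e.1 <;> simp_all [φ]
  have hcross : ∀ x ∈ insert e.1 S', ∀ x' ∈ insert e.1 S', ∀ v,
      v ∈ p x ++ [x] → v ∈ r (φ x') ++ [φ x'] → x = x' := by
    intro x hx x' hx' v h₁ h₂
    obtain ⟨hxφ, hxS'⟩ := hS'.eq_of_mem_of_mem (subset_insert _ _) (subset_insert _ _)
      (hp.isWalk x hx) (hp.notMem x hx) (hr.isWalk_reverse (hφ x' hx'))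
      (by simpa using hr.notMem _ (hφ x' hx')) h₁ (by simpa [or_comm] using h₂)
    have : x' ≠ e.1 := fun h => he₂ (by simp_all [φ])
    simpa [φ, this] using hxφ
  intro x hx x' hx' hne v hv hv'
  rcases mem_join hv with h₁ | h₁ <;> rcases mem_join hv' with h₂ | h₂
  · exact hp.pairwise_disjoint hx hx' hne h₁ h₂
  · exact hne (hcross x hx x' hx' v h₁ h₂)
  · exact hne (hcross x' hx' x hx v h₂ h₁).symm
  · exact hr.pairwise_disjoint (hφ x hx) (hφ x' hx') (fun h => hne (hφinj x hx x' hx' h))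
      h₁ h₂

theorem exists_disjoint_walks (E : Finset (α × α)) (A B : Finset α) (k : ℕ)
    (hk : ∀ S, Separates E A B S → k ≤ #S) :
    ∃ W : Fin k → List α, (∀ i, IsWalk E A B (W i)) ∧ Pairwise (List.Disjoint on W) := by
  rcases E.eq_empty_or_nonempty with rfl | ⟨e, he⟩
  · refine exists_disjoint_walks_of_le_card (X := A ∩ B) (W := fun a => [a])
      (fun a ha => isWalk_singleton (mem_inter.1 ha).1 (mem_inter.1 ha).2) (fun a _ b _ hab => ?_)
      (hk _ separates_empty_inter)
    simpa [onFun] using Ne.symm hab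
  by_cases h : ∀ S, Separates (E.erase e) A B S → k ≤ #S
  · obtain ⟨W, hW, hd⟩ := exists_disjoint_walks (E.erase e) A B k h
    exact ⟨W, fun i => (hW i).mono (erase_subset e E) subset_rfl subset_rfl, hd⟩
  push Not at h
  obtain ⟨S', hS', hlt⟩ := h
  have hX := hk _ hS'.insert_fst
  have hY := hk _ hS'.insert_snd
  have he₂ : e.2 ∉ S' := fun h => by rw [insert_eq_of_mem h] at hY; omega
  obtain ⟨Q, hQ, hQd⟩ := exists_disjoint_walks (E.erase e) A (insert e.1 S') k
    fun S hS => hk S (hS'.of_separates_insert_fst hS)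
  obtain ⟨R, hR, hRd⟩ := exists_disjoint_walks ((E.erase e).image Prod.swap) B (insert e.2 S') k
    fun S hS => hk S (hS'.of_separates_insert_snd hS)
  obtain ⟨p, hp⟩ := exists_isLinkage hQ hQd ((card_insert_le _ _).trans hlt)
  obtain ⟨r, hr⟩ := exists_isLinkage hR hRd ((card_insert_le _ _).trans hlt)
  exact exists_disjoint_walks_of_le_card (fun x hx => isWalk_join he hp hr hx)
    (pairwise_disjoint_join hS' he₂ hp hr) hX
termination_by #E
decreasing_by
  all_goals first
    | exact card_erase_lt_of_mem he
    | exact card_image_le.trans_lt (card_erase_lt_of_mem he)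

end Menger

theorem Nat.sSup_eq_sInf_of_forall_le {P Q : ℕ → Prop} (hQ : ∃ n, Q n)
    (hle : ∀ m n, P m → Q n → m ≤ n) (hP : P (sInf {n | Q n})) :
    sSup {m | P m} = sInf {n | Q n} :=
  le_antisymm (csSup_le ⟨_, hP⟩ fun m hm => hle m _ hm (Nat.sInf_mem hQ))
    (le_csSup ⟨_, fun m hm => hle m _ hm (Nat.sInf_mem hQ)⟩ hP)

open Menger

namespace TVG

variable (G : TVG V)

def contactSet : Finset ((V × V) × ℕ) :=
  (G.E ×ˢ Icc 1 G.T).filter fun c => G.ρ c.1 c.2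

variable {G} in
theorem mem_contactSet {c : (V × V) × ℕ} : c ∈ G.contactSet ↔ G.Contact c.1 c.2 := by
  simp only [contactSet, mem_filter, mem_product, mem_Icc, Contact]
  tauto

variable [DecidableEq V]

def contactGraph : Finset (((V × V) × ℕ) × ((V × V) × ℕ)) :=
  (G.contactSet ×ˢ G.contactSet).filter fun q => q.1.1.2 = q.2.1.1 ∧ q.1.2 < q.2.2

def departures (s : V) : Finset ((V × V) × ℕ) := G.contactSet.filter fun c => c.1.1 = s

def arrivals (d : V) : Finset ((V × V) × ℕ) := G.contactSet.filter fun c => c.1.2 = d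

variable {G} {s d : V}

theorem Journey.isWalk (J : G.Journey s d) :
    IsWalk G.contactGraph (G.departures s) (G.arrivals d) J.contacts := by
  have hJ : ∀ c ∈ J.contacts, c ∈ G.contactSet := fun c hc => mem_contactSet.2 (J.valid c hc)
  refine ⟨J.chain.imp_of_mem_imp fun a b ha hb h =>
      mem_filter.2 ⟨mem_product.2 ⟨hJ a ha, hJ b hb⟩, h⟩,
    ⟨_, mem_filter.2 ⟨hJ _ (List.head_mem J.ne), J.starts⟩, List.head?_eq_some_head J.ne⟩,
    ⟨_, mem_filter.2 ⟨hJ _ (List.getLast_mem J.ne), J.ends⟩,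
      List.getLast?_eq_some_getLast J.ne⟩⟩

theorem exists_journey_of_isWalk {l : List ((V × V) × ℕ)}
    (h : IsWalk G.contactGraph (G.departures s) (G.arrivals d) l) :
    ∃ J : G.Journey s d, J.contacts = l := by
  obtain ⟨hc, ⟨a, ha, hla⟩, ⟨b, hb, hlb⟩⟩ := h
  have hne : l ≠ [] := by rintro rfl; simp at hla
  have hhead : l.head hne = a := Option.some.inj ((List.head?_eq_some_head hne).symm.trans hla)
  have hlast : l.getLast hne = b :=
    Option.some.inj ((List.getLast?_eq_some_getLast hne).symm.trans hlb)
  have hvalid : ∀ c ∈ l, c ∈ G.contactSet := hc.induction _ _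
    (fun _ _ h _ => (mem_product.1 (mem_filter.1 h).1).2)
    (fun _ => hhead ▸ (mem_filter.1 ha).1)
  exact ⟨⟨l, hne, hhead ▸ (mem_filter.1 ha).2, hlast ▸ (mem_filter.1 hb).2,
    fun c hc => mem_contactSet.1 (hvalid c hc),
    hc.imp fun a b (h : (a, b) ∈ G.contactGraph) => (mem_filter.1 h).2⟩, rfl⟩

end TVG

theorem kills_one_iff {e : V × V} {t : ℕ} {c : (V × V) × ℕ} :
    Kills e t 1 c ↔ c = (e, t) := by
  refine ⟨fun ⟨he, h₁, h₂⟩ => Prod.ext he (by omega), ?_⟩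
  rintro rfl
  exact ⟨rfl, le_rfl, Nat.lt_succ_self t⟩

theorem isCutSet_contactSet (G : TVG V) (s d : V) : IsCutSet G s d 1 G.contactSet := fun J =>
  ⟨_, List.head_mem J.ne, _, TVG.mem_contactSet.2 (J.valid _ (List.head_mem J.ne)),
    kills_one_iff.2 rfl⟩

theorem isCutSet_one_iff [DecidableEq V] {G : TVG V} {s d : V} {F : Finset ((V × V) × ℕ)} :
    IsCutSet G s d 1 F ↔ Separates G.contactGraph (G.departures s) (G.arrivals d) F := by
  refine ⟨fun h l hl => ?_, fun h J => ?_⟩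
  · obtain ⟨J, rfl⟩ := TVG.exists_journey_of_isWalk hl
    obtain ⟨c, hc, f, hf, hk⟩ := h J
    exact ⟨c, hc, kills_one_iff.1 hk ▸ hf⟩
  · obtain ⟨c, hc, hcF⟩ := h _ J.isWalk
    exact ⟨c, hc, c, hcF, kills_one_iff.2 rfl⟩

theorem deltaDisjoint_one_iff {G : TVG V} {s d : V} {J₁ J₂ : G.Journey s d} :
    DeltaDisjoint 1 J₁ J₂ ↔ J₁.contacts.Disjoint J₂.contacts := by
  refine ⟨fun h c h₁ h₂ => by simpa using h c.1 c.2 c.2 h₁ h₂,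
    fun h e t₁ t₂ h₁ h₂ => ?_⟩
  by_contra hlt
  have ht : t₁ = t₂ := Nat.eq_of_dist_eq_zero (by omega)
  exact h h₁ (ht ▸ h₂)

theorem hasDisjointJourneys_one_iff [DecidableEq V] {G : TVG V} {s d : V} {m : ℕ} :
    HasDisjointJourneys G s d 1 m ↔ ∃ W : Fin m → List ((V × V) × ℕ),
      (∀ i, IsWalk G.contactGraph (G.departures s) (G.arrivals d) (W i)) ∧
        Pairwise (List.Disjoint on W) := by
  refine ⟨fun ⟨J, hJ⟩ => ⟨fun i => (J i).contacts, fun i => (J i).isWalk,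
    fun i j hij => deltaDisjoint_one_iff.1 (hJ i j hij)⟩, fun ⟨W, hW, hd⟩ => ?_⟩
  choose J hJ using fun i => TVG.exists_journey_of_isWalk (hW i)
  exact ⟨J, fun i j hij => deltaDisjoint_one_iff.2 (by simpa [hJ] using hd hij)⟩

/-- Menger's theorem for `δ = 1` in time-varying graphs: the maximum number of
pairwise `1`-disjoint `s`-`d` journeys equals the minimum number of `1`-removals
(single-contact deletions) rendering `d` unreachable from `s`. -/
theorem menger_delta_one (G : TVG V) (s d : V) :
    maxFlow G s d 1 = minCut G s d 1 := by
  classical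
  unfold maxFlow minCut
  refine Nat.sSup_eq_sInf_of_forall_le ?_ ?_ ?_
  · exact ⟨_, _, rfl, isCutSet_contactSet G s d⟩
  · rintro m _ hm ⟨F, rfl, hF⟩
    obtain ⟨W, hW, hd⟩ := hasDisjointJourneys_one_iff.1 hm
    exact card_le_of_separates hW hd (isCutSet_one_iff.1 hF)
  · exact hasDisjointJourneys_one_iff.2 <| exists_disjoint_walks _ _ _ _ fun S hS =>
      Nat.sInf_le ⟨S, rfl, isCutSet_one_iff.2 hS⟩
end

section
/- The maximum number of 1-disjoint s-d journeys in a time-varying graph equals the maximum number of internally node-disjoint s-d paths in its Line Graph, and the minimum number of 1-removals disconnecting s from d equals the minimum s-d node cut of the Line Graph. -/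
variable {V : Type}

/-- Nodes of the Line Graph: a node for `s`, a node for `d`, and one node per contact. -/
inductive LNode (V : Type) where
  | src : LNode V
  | dst : LNode V
  | ctc : (V × V) × ℕ → LNode V

/-- Adjacency in the Line Graph: `s → v_{e,t}` iff `start(e) = s`; `v_{e,t} → d` iff
`end(e) = d`; `v_{e₁,t₁} → v_{e₂,t₂}` iff `end(e₁) = start(e₂)` and `t₂ > t₁`;
in each case the involved contacts must be present. -/
def LAdj (G : TVG V) (s d : V) : LNode V → LNode V → Prop
  | .src, .ctc c => G.Contact c.1 c.2 ∧ c.1.1 = s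
  | .ctc c, .dst => G.Contact c.1 c.2 ∧ c.1.2 = d
  | .ctc c₁, .ctc c₂ =>
      G.Contact c₁.1 c₁.2 ∧ G.Contact c₂.1 c₂.2 ∧ c₁.1.2 = c₂.1.1 ∧ c₁.2 < c₂.2
  | _, _ => False

/-- A directed `s`-`d` path in the Line Graph, recorded by the list of its internal
(contact) nodes. -/
def IsLinePath (G : TVG V) (s d : V) (l : List ((V × V) × ℕ)) : Prop :=
  List.Chain (LAdj G s d) LNode.src (l.map LNode.ctc ++ [LNode.dst])

/-! A journey is exactly the list of internal nodes of an `s`-`d` path in the Line Graph: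
the Line-Graph adjacency records exactly the presence of the contacts, the matching of
consecutive endpoints and the increase of the slots. For `δ = 1`, two journeys are disjoint
precisely when they share no contact, i.e. when the corresponding paths are internally
node-disjoint, and a `1`-removal kills exactly one contact, i.e. one Line-Graph node. Hence
both sides are the `sSup`, resp. `sInf`, of the same set. -/

namespace TVG

variable {G : TVG V} {s d : V}

theorem isChain_lAdj_ctc_iff (a : (V × V) × ℕ) (l : List ((V × V) × ℕ)) :
    List.IsChain (LAdj G s d) (.ctc a :: (l.map .ctc ++ [.dst])) ↔
      (∀ c ∈ a :: l, G.Contact c.1 c.2) ∧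
      List.IsChain (fun c₁ c₂ => c₁.1.2 = c₂.1.1 ∧ c₁.2 < c₂.2) (a :: l) ∧
      ((a :: l).getLast (List.cons_ne_nil a l)).1.2 = d := by
  induction l generalizing a with
  | nil => simp [LAdj]
  | cons b l ih =>
    rw [List.map_cons, List.cons_append, List.isChain_cons_cons, ih]
    simp only [LAdj, List.forall_mem_cons, List.isChain_cons_cons, List.getLast_cons_cons]
    tauto

theorem isLinePath_iff_exists_journey (l : List ((V × V) × ℕ)) :
    IsLinePath G s d l ↔ ∃ J : G.Journey s d, J.contacts = l := by
  cases l with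
  | nil => simp [IsLinePath, List.Chain, LAdj, fun J : G.Journey s d => J.ne]
  | cons a l =>
    rw [IsLinePath, List.Chain, List.map_cons, List.cons_append, List.isChain_cons_cons,
      isChain_lAdj_ctc_iff]
    constructor
    · rintro ⟨⟨-, hs⟩, hv, hc, hd⟩
      exact ⟨⟨a :: l, List.cons_ne_nil a l, hs, hd, hv, hc⟩, rfl⟩
    · rintro ⟨⟨_, _, hs, hd, hv, hc⟩, rfl⟩
      exact ⟨⟨hv a List.mem_cons_self, hs⟩, hv, hc, hd⟩

theorem deltaDisjoint_one_iff {J₁ J₂ : G.Journey s d} :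
    DeltaDisjoint 1 J₁ J₂ ↔ J₁.contacts.Disjoint J₂.contacts := by
  constructor
  · intro h c h₁ h₂
    simpa using h c.1 c.2 c.2 h₁ h₂
  · intro h e t₁ t₂ h₁ h₂
    exact Nat.dist_pos_of_ne fun ht => h h₁ (ht ▸ h₂)

theorem kills_one_iff {e : V × V} {t : ℕ} {c : (V × V) × ℕ} : Kills e t 1 c ↔ c = (e, t) := by
  obtain ⟨e', t'⟩ := c
  simp only [Kills, Prod.mk.injEq, and_congr_right_iff]
  omega

theorem isCutSet_one_iff {F : Finset ((V × V) × ℕ)} :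
    IsCutSet G s d 1 F ↔ ∀ J : G.Journey s d, ∃ c ∈ J.contacts, c ∈ F := by
  simp only [IsCutSet, kills_one_iff, Prod.mk.eta, exists_eq_right']

theorem hasDisjointJourneys_one_iff {m : ℕ} :
    HasDisjointJourneys G s d 1 m ↔ ∃ ls : Fin m → List ((V × V) × ℕ),
      (∀ i, IsLinePath G s d (ls i)) ∧ ∀ i j, i ≠ j → (ls i).Disjoint (ls j) := by
  constructor
  · rintro ⟨Js, hJs⟩
    exact ⟨fun i => (Js i).contacts, fun i => (isLinePath_iff_exists_journey _).2 ⟨_, rfl⟩,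
      fun i j hij => deltaDisjoint_one_iff.1 (hJs i j hij)⟩
  · rintro ⟨ls, hls, hdisj⟩
    choose Js hJs using fun i => (isLinePath_iff_exists_journey (ls i)).1 (hls i)
    exact ⟨Js, fun i j hij => deltaDisjoint_one_iff.2 (hJs i ▸ hJs j ▸ hdisj i j hij)⟩

theorem isCutSet_one_iff_forall_isLinePath {F : Finset ((V × V) × ℕ)} :
    IsCutSet G s d 1 F ↔ ∀ l, IsLinePath G s d l → ∃ c ∈ l, c ∈ F := by
  simp only [isCutSet_one_iff, isLinePath_iff_exists_journey, forall_exists_index,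
    forall_apply_eq_imp_iff]

end TVG

/-- `MaxFlow₁` equals the maximum number of internally node-disjoint `s`-`d` paths in
the Line Graph, and `MinCut₁` equals the minimum `s`-`d` node cut of the Line Graph
(internal nodes of a Line-Graph path are contact nodes). -/
theorem flow_cut_via_lineGraph (G : TVG V) (s d : V) :
    maxFlow G s d 1 =
      sSup {m | ∃ ls : Fin m → List ((V × V) × ℕ),
        (∀ i, IsLinePath G s d (ls i)) ∧
        ∀ i j, i ≠ j → List.Disjoint (ls i) (ls j)} ∧
    minCut G s d 1 =
      sInf {k | ∃ S : Finset ((V × V) × ℕ), S.card = k ∧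
        ∀ l : List ((V × V) × ℕ), IsLinePath G s d l → ∃ c ∈ l, c ∈ S} := by
  simp only [maxFlow, minCut, TVG.hasDisjointJourneys_one_iff,
    TVG.isCutSet_one_iff_forall_isLinePath, and_self]
end

section
/- For every δ≥2 and every k≥1, there exists a time-varying graph with a source-destination pair (s,d) such that the maximum number of δ-disjoint s-d journeys equals 1 while the minimum number of δ-removals needed to disconnect d from s equals k; consequently the gap ratio MinCut_δ/MaxFlow_δ can be arbitrarily large. -/
variable {V : Type}

/-!
Take `n = 2k` lanes `1, …, n` and, for each pair `b < a`, a hub edge `x a b → y a b` open at two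
consecutive slots: the low one for lane `b`, the high one for lane `a`. Hubs are scheduled in
lexicographic order of `(a, b)`; lane `p` first climbs its column (hubs `(p, b)`, high slots), then
rides its row (hubs `(a, p)`, low slots). Every edge lies on at most two lanes, so fewer than `k`
removals leave a lane intact.

A journey can switch from a row to a column at a hub but never back, and one that reaches a hub
after its low slot is forced through the rest of that column at high slots. Every journey crosses
all columns from its first one `p` on, and enters `(p, 1)` after the low slot unless `p = 2`. So of
two journeys, the one starting in the later column `q` is forced through all of column `q` (or
`q = 2`, whose only hub is `(2, 1)`), where the other crosses at some hub within one slot of it.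
The same forcing shows that removing the hubs `(2i + 2, 2i + 1)` from their low slots on, `k`
removals in all, cuts every journey.
-/

namespace TVG

variable (G : TVG V)

/-- `G.Route d u t l`: the contacts `l` form a time-respecting walk from `u` to `d` whose
first contact comes strictly after slot `t`. -/
inductive Route (d : V) : V → ℕ → List ((V × V) × ℕ) → Prop
  | nil (t : ℕ) : Route d d t []
  | cons {u v : V} {t t' : ℕ} {l : List ((V × V) × ℕ)} :
      G.Contact (u, v) t' → t < t' → Route d v t' l → Route d u t (((u, v), t') :: l)

variable {G}

namespace Route

variable {d u : V} {t : ℕ} {l : List ((V × V) × ℕ)}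

theorem mono {t' : ℕ} (h : G.Route d u t l) (ht : t' ≤ t) : G.Route d u t' l := by
  cases h with
  | nil => exact .nil _
  | cons hc hlt hr => exact .cons hc (by omega) hr

theorem contact (h : G.Route d u t l) : ∀ c ∈ l, G.Contact c.1 c.2 := by
  induction h with
  | nil => simp
  | cons hc _ _ ih => exact List.forall_mem_cons.2 ⟨hc, ih⟩

theorem isChain (h : G.Route d u t l) :
    l.IsChain (fun c₁ c₂ => c₁.1.2 = c₂.1.1 ∧ c₁.2 < c₂.2) := by
  induction h with
  | nil => exact .nil
  | cons _ _ hr ih =>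
    cases hr with
    | nil => exact .singleton _
    | cons _ ht' _ => exact .cons_cons ⟨rfl, ht'⟩ ih

theorem head_fst (h : G.Route d u t l) (hl : l ≠ []) : (l.head hl).1.1 = u := by
  cases h with
  | nil => exact absurd rfl hl
  | cons => rfl

theorem getLast_snd (h : G.Route d u t l) (hl : l ≠ []) : (l.getLast hl).1.2 = d := by
  induction h with
  | nil => exact absurd rfl hl
  | cons _ _ hr ih =>
    cases hr with
    | nil => rfl
    | cons => rw [List.getLast_cons (List.cons_ne_nil _ _)]; exact ih _

def toJourney {s : V} (h : G.Route d s t l) (hl : l ≠ []) : G.Journey s d where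
  contacts := l
  ne := hl
  starts := h.head_fst hl
  ends := h.getLast_snd hl
  valid := h.contact
  chain := h.isChain

theorem of_isChain : ∀ (l : List ((V × V) × ℕ)) (hl : l ≠ []) {t : ℕ},
    l.IsChain (fun c₁ c₂ => c₁.1.2 = c₂.1.1 ∧ c₁.2 < c₂.2) →
    (∀ c ∈ l, G.Contact c.1 c.2) →
    (l.getLast hl).1.2 = d → t < (l.head hl).2 → G.Route d (l.head hl).1.1 t l
  | [((u, v), t')], _, _, _, hv, hd, ht =>
    .cons (hv _ List.mem_cons_self) ht
      (by simp only [List.getLast_singleton] at hd; exact hd ▸ .nil _)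
  | ((u, v), t') :: c :: l, _, _, hch, hv, hd, ht => by
    obtain ⟨⟨hvc, htc⟩, hch⟩ := List.isChain_cons_cons.1 hch
    refine .cons (hv _ List.mem_cons_self) ht ?_
    have := of_isChain (c :: l) (List.cons_ne_nil _ _) hch (fun c' hc' => hv c' (.tail _ hc'))
      (by rwa [List.getLast_cons (List.cons_ne_nil _ _)] at hd) htc
    rwa [List.head_cons, ← hvc] at this

end Route

theorem Journey.route {s d : V} (J : G.Journey s d) : G.Route d s 0 J.contacts := by
  have := Route.of_isChain J.contacts J.ne J.chain J.valid J.ends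
    (J.valid _ (List.head_mem J.ne)).2.1
  rwa [J.starts] at this

end TVG

theorem maxFlow_eq_one {G : TVG V} {s d : V} {δ : ℕ} (J : G.Journey s d)
    (h : ∀ J₁ J₂ : G.Journey s d, ¬ DeltaDisjoint δ J₁ J₂) : maxFlow G s d δ = 1 := by
  refine IsGreatest.csSup_eq
    ⟨⟨fun _ => J, fun i j hij => (hij (Subsingleton.elim i j)).elim⟩, ?_⟩
  rintro m ⟨Js, hJs⟩
  by_contra! hm
  exact h _ _ (hJs ⟨0, by omega⟩ ⟨1, hm⟩ (by simp [Fin.ext_iff]))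

theorem minCut_eq_card {G : TVG V} {s d : V} {δ : ℕ} {F : Finset ((V × V) × ℕ)}
    (hF : IsCutSet G s d δ F) (hmin : ∀ F', IsCutSet G s d δ F' → F.card ≤ F'.card) :
    minCut G s d δ = F.card :=
  IsLeast.csInf_eq ⟨⟨F, rfl, hF⟩, by rintro m ⟨F', rfl, hF'⟩; exact hmin F' hF'⟩

namespace MengerGap

inductive Node
  | src
  | dst
  | x (a b : ℕ)
  | y (a b : ℕ)
  deriving DecidableEq

open Node

abbrev hub (a b : ℕ) : Node × Node := (x a b, y a b)

def base (a b : ℕ) : ℕ := 3 * (a * a + b)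

theorem base_mono {a b a' b' : ℕ} (ha : a ≤ a') (hb : b ≤ b') : base a b ≤ base a' b' := by
  unfold base; gcongr

theorem base_succ_right (a b : ℕ) : base a (b + 1) = base a b + 3 := by
  unfold base; ring

theorem base_add_three_le {a b b' : ℕ} (hb : b ≤ a) (hb' : 1 ≤ b') :
    base a b + 3 ≤ base (a + 1) b' := by
  unfold base; nlinarith

/-- Hub `(a, b)`, `1 ≤ b < a ≤ n`, is open to lane `b` at slot `base a b + 1` and to lane `a` at
slot `base a b + 2`. Lane `p ≥ 2` enters at `x p 1` too late for the low slot, lane `1` enters at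
`x 2 1` in time for it. -/
inductive Step (n : ℕ) : Node → Node → ℕ → Prop
  | start {p : ℕ} : 2 ≤ p → p ≤ n → Step n src (x p 1) (base p 1 + 1)
  | startEarly : 2 ≤ n → Step n src (x 2 1) (base 2 1)
  | hubLow {a b : ℕ} : 1 ≤ b → b < a → a ≤ n → Step n (x a b) (y a b) (base a b + 1)
  | hubHigh {a b : ℕ} : 1 ≤ b → b < a → a ≤ n → Step n (x a b) (y a b) (base a b + 2)
  | row {a b : ℕ} : 1 ≤ b → b < a → a < n → Step n (y a b) (x (a + 1) b) (base a b + 2)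
  | diag {b : ℕ} : 1 ≤ b → b + 2 ≤ n →
      Step n (y (b + 1) b) (x (b + 2) (b + 1)) (base (b + 1) b + 3)
  | climb {a b : ℕ} : 1 ≤ b → b + 1 < a → a ≤ n →
      Step n (y a b) (x a (b + 1)) (base a (b + 1) + 1)
  | exit {b : ℕ} : 1 ≤ b → b < n → Step n (y n b) dst (base n b + 2)
  | exitTop {b : ℕ} : 1 ≤ b → b + 1 = n → Step n (y n b) dst (base n b + 3)

def nodes (n : ℕ) : Finset Node :=
  {src, dst} ∪
    (Finset.range (n + 1) ×ˢ Finset.range (n + 1)).biUnion fun ab => {x ab.1 ab.2, y ab.1 ab.2}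

theorem Step.mem_nodes {n : ℕ} {u v : Node} {t : ℕ} (h : Step n u v t) :
    u ∈ nodes n ∧ v ∈ nodes n := by
  cases h <;> simp [nodes] <;> omega

theorem Step.slot_bounds {n : ℕ} {u v : Node} {t : ℕ} (h : Step n u v t) :
    1 ≤ t ∧ t ≤ base n n + 3 := by
  cases h with
  | @start p _ hp => have := base_mono hp (show 1 ≤ n by omega); omega
  | startEarly hn =>
    have := base_mono hn (show 1 ≤ n by omega); simp only [base] at this ⊢; omega
  | @hubLow a b _ hba han => have := base_mono han (show b ≤ n by omega); omega
  | @hubHigh a b _ hba han => have := base_mono han (show b ≤ n by omega); omega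
  | @row a b _ hba han => have := base_mono (show a ≤ n by omega) (show b ≤ n by omega); omega
  | @diag b _ hbn => have := base_mono (show b + 1 ≤ n by omega) (show b ≤ n by omega); omega
  | @climb a b _ hba han => have := base_mono han (show b + 1 ≤ n by omega); omega
  | @exit b _ hbn => have := base_mono (le_refl n) hbn.le; omega
  | @exitTop b _ hbn => have := base_mono (le_refl n) (show b ≤ n by omega); omega

open scoped Classical in
noncomputable def graph (n : ℕ) : TVG Node where
  E := nodes n ×ˢ nodes n
  T := base n n + 3
  ρ e t := decide (Step n e.1 e.2 t)

theorem contact_iff {n : ℕ} {u v : Node} {t : ℕ} :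
    (graph n).Contact (u, v) t ↔ Step n u v t := by
  refine ⟨fun h => by simpa [graph] using h.2.2.2, fun h => ?_⟩
  obtain ⟨hu, hv⟩ := h.mem_nodes
  exact ⟨Finset.mem_product.2 ⟨hu, hv⟩, h.slot_bounds.1, h.slot_bounds.2,
    by simpa [graph] using h⟩

def Node.lanes : Node → Finset ℕ
  | x a b | y a b => {a, b}
  | _ => ∅

def edgeLanes : Node × Node → Finset ℕ
  | (src, v) => v.lanes
  | (u, _) => u.lanes

theorem card_edgeLanes_le (e : Node × Node) : (edgeLanes e).card ≤ 2 := by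
  have h : ∀ v : Node, v.lanes.card ≤ 2 := by
    rintro (_ | _ | _ | _) <;> simp only [Node.lanes, Finset.card_empty] <;>
      first | omega | exact Finset.card_le_two
  obtain ⟨(_ | _ | _ | _), v⟩ := e <;> exact h _

variable {n : ℕ}

theorem exists_row_route {p a : ℕ} (hp : 1 ≤ p) (hpa : p < a) (han : a ≤ n) :
    ∃ l, (graph n).Route dst (x a p) (base a p) l ∧ ∀ c ∈ l, p ∈ edgeLanes c.1 := by
  by_cases ha : a < n
  · obtain ⟨l, hl, hlane⟩ := exists_row_route (a := a + 1) hp (by omega) ha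
    refine ⟨_, .cons (contact_iff.2 (.hubLow hp hpa han)) (by omega)
      (.cons (contact_iff.2 (.row hp hpa ha)) (by omega)
        (hl.mono (by have := base_add_three_le hpa.le hp; omega))), ?_⟩
    simpa [edgeLanes, Node.lanes] using hlane
  · obtain rfl : a = n := by omega
    refine ⟨_, .cons (contact_iff.2 (.hubLow hp hpa le_rfl)) (by omega)
      (.cons (contact_iff.2 (.exit hp hpa)) (by omega) (.nil _)), ?_⟩
    simp [edgeLanes, Node.lanes]
termination_by n - a

theorem exists_column_route {p b : ℕ} (hpn : p ≤ n) (hb : 1 ≤ b) (hbp : b < p) :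
    ∃ l, (graph n).Route dst (x p b) (base p b + 1) l ∧ ∀ c ∈ l, p ∈ edgeLanes c.1 := by
  by_cases hb' : b + 1 < p
  · obtain ⟨l, hl, hlane⟩ := exists_column_route (b := b + 1) hpn (by omega) hb'
    refine ⟨_, .cons (contact_iff.2 (.hubHigh hb hbp hpn)) (by omega)
      (.cons (contact_iff.2 (.climb hb hb' hpn)) (by rw [base_succ_right]; omega) hl), ?_⟩
    simpa [edgeLanes, Node.lanes] using hlane
  obtain rfl : p = b + 1 := by omega
  by_cases hn : b + 2 ≤ n
  · obtain ⟨l, hl, hlane⟩ :=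
      exists_row_route (a := b + 2) (p := b + 1) (by omega) (by omega) hn
    refine ⟨_, .cons (contact_iff.2 (.hubHigh hb hbp hpn)) (by omega)
      (.cons (contact_iff.2 (.diag hb hn)) (by omega)
        (hl.mono (base_add_three_le (by omega) (by omega)))), ?_⟩
    simpa [edgeLanes, Node.lanes] using hlane
  · obtain rfl : n = b + 1 := by omega
    refine ⟨_, .cons (contact_iff.2 (.hubHigh hb hbp hpn)) (by omega)
      (.cons (contact_iff.2 (.exitTop hb rfl)) (by omega) (.nil _)), ?_⟩
    simp [edgeLanes, Node.lanes]
termination_by p - b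

theorem exists_lane_journey {p : ℕ} (hn : 2 ≤ n) (hp : 1 ≤ p) (hpn : p ≤ n) :
    ∃ J : (graph n).Journey src dst, ∀ c ∈ J.contacts, p ∈ edgeLanes c.1 := by
  obtain ⟨l, hl, hlane⟩ :
      ∃ l, (graph n).Route dst src 0 l ∧ ∀ c ∈ l, p ∈ edgeLanes c.1 := by
    by_cases hp1 : p = 1
    · subst hp1
      obtain ⟨l, hl, hlane⟩ := exists_row_route (a := 2) le_rfl (by omega) hn
      exact ⟨_, .cons (contact_iff.2 (.startEarly hn)) (by simp [base]) hl,
        by simpa [edgeLanes, Node.lanes] using hlane⟩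
    · obtain ⟨l, hl, hlane⟩ := exists_column_route hpn le_rfl (by omega : 1 < p)
      exact ⟨_, .cons (contact_iff.2 (.start (by omega) hpn)) (by omega) hl,
        by simpa [edgeLanes, Node.lanes] using hlane⟩
  exact ⟨hl.toJourney (by rintro rfl; cases hl), hlane⟩

theorem route_from_src {t : ℕ} {l : List ((Node × Node) × ℕ)}
    (h : (graph n).Route dst src t l) :
    ∃ p t' l', l = ((src, x p 1), t') :: l' ∧ (graph n).Route dst (x p 1) t' l' ∧
      2 ≤ p ∧ p ≤ n ∧ (base p 1 + 1 ≤ t' ∨ p = 2) := by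
  obtain _ | ⟨hc, -, hr⟩ := h
  cases contact_iff.1 hc with
  | start hp hpn => exact ⟨_, _, _, rfl, hr, hp, hpn, .inl le_rfl⟩
  | startEarly hn => exact ⟨_, _, _, rfl, hr, le_rfl, hn, .inr rfl⟩

theorem route_from_x {a b t : ℕ} {l : List ((Node × Node) × ℕ)}
    (h : (graph n).Route dst (x a b) t l) :
    ∃ t' l', l = (hub a b, t') :: l' ∧ (graph n).Route dst (y a b) t' l' ∧ t < t' ∧
      (t' = base a b + 1 ∨ t' = base a b + 2) := by
  obtain _ | ⟨hc, ht, hr⟩ := h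
  cases contact_iff.1 hc with
  | hubLow => exact ⟨_, _, rfl, hr, ht, .inl rfl⟩
  | hubHigh => exact ⟨_, _, rfl, hr, ht, .inr rfl⟩

theorem route_from_y_of_late {a b t : ℕ} {l : List ((Node × Node) × ℕ)}
    (h : (graph n).Route dst (y a b) t l) (ht : base a b + 2 ≤ t) :
    ∃ v t' l', l = ((y a b, v), t') :: l' ∧ (graph n).Route dst v t' l' ∧
      (b + 1 < a ∧ v = x a (b + 1) ∧ t' = base a (b + 1) + 1 ∨
        b + 1 = a ∧ (a < n ∧ v = x (a + 1) a ∨ a = n ∧ v = dst)) := by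
  obtain _ | ⟨hc, ht', hr⟩ := h
  cases contact_iff.1 hc with
  | row => omega
  | diag _ hn => exact ⟨_, _, _, rfl, hr, .inr ⟨rfl, .inl ⟨by omega, rfl⟩⟩⟩
  | climb _ hba => exact ⟨_, _, _, rfl, hr, .inl ⟨hba, rfl, rfl⟩⟩
  | exit => omega
  | exitTop _ hbn => exact ⟨_, _, _, rfl, hr, .inr ⟨hbn, .inr ⟨rfl, rfl⟩⟩⟩

theorem climbs_column {a b t : ℕ} {l : List ((Node × Node) × ℕ)}
    (h : (graph n).Route dst (x a b) t l) (ht : base a b + 1 ≤ t) :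
    (∀ b', b ≤ b' → b' < a → (hub a b', base a b' + 2) ∈ l) ∧
      (a < n → ∃ s, (hub (a + 1) a, s) ∈ l) := by
  obtain ⟨t', l', rfl, hr, htt', hslot⟩ := route_from_x h
  obtain rfl : t' = base a b + 2 := by omega
  obtain ⟨v, t'', l'', rfl, hr', ⟨hba, rfl, rfl⟩ | ⟨rfl, hnext⟩⟩ :=
    route_from_y_of_late hr le_rfl
  · obtain ⟨hcol, hrow⟩ := climbs_column hr' le_rfl
    refine ⟨fun b' hb' hb'a => ?_, fun ha => ?_⟩
    · rcases hb'.eq_or_lt with rfl | hlt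
      · exact List.mem_cons_self
      · exact .tail _ (.tail _ (hcol b' hlt hb'a))
    · obtain ⟨s, hs⟩ := hrow ha
      exact ⟨s, .tail _ (.tail _ hs)⟩
  · refine ⟨fun b' hb' hb'a => ?_, fun ha => ?_⟩
    · obtain rfl : b' = b := by omega
      exact List.mem_cons_self
    · obtain ⟨-, rfl⟩ | ⟨rfl, -⟩ := hnext
      · obtain ⟨s, l''', rfl, -⟩ := route_from_x hr'
        exact ⟨s, .tail _ (.tail _ List.mem_cons_self)⟩
      · omega
termination_by a - b

/-- `u.Before A`: every route from `u` to `dst` still has to cross column `A`. -/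
def Node.Before : Node → ℕ → Prop
  | x a _, A => a ≤ A
  | y a _, A => a < A
  | _, _ => False

theorem crosses_column {u : Node} {t : ℕ} {l : List ((Node × Node) × ℕ)}
    (h : (graph n).Route dst u t l) {A : ℕ} (hA : A ≤ n) :
    u.Before A → ∃ B s, (hub A B, s) ∈ l ∧ 1 ≤ B ∧ B < A := by
  induction h with
  | nil => exact False.elim
  | cons hc _ _ ih =>
    cases contact_iff.1 hc with
    | start | startEarly => exact False.elim
    | @hubLow a b hb hba | @hubHigh a b hb hba =>
      intro (haA : a ≤ A)
      rcases haA.eq_or_lt with rfl | hlt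
      · exact ⟨b, _, List.mem_cons_self, hb, hba⟩
      · obtain ⟨B, s, hs, hB⟩ := ih hlt
        exact ⟨B, s, .tail _ hs, hB⟩
    | row | diag | climb =>
      intro hA'
      obtain ⟨B, s, hs, hB⟩ := ih (by simp only [Node.Before] at hA' ⊢; omega)
      exact ⟨B, s, .tail _ hs, hB⟩
    | exit | exitTop => exact fun (hA' : n < A) => absurd hA hA'.not_ge

theorem exists_shared_hub {p q t t' : ℕ} {l l' : List ((Node × Node) × ℕ)}
    (hl : (graph n).Route dst (x p 1) t l) (hl' : (graph n).Route dst (x q 1) t' l')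
    (hpq : p ≤ q) (hqn : q ≤ n) (hq : base q 1 + 1 ≤ t' ∨ q = 2) :
    ∃ a b s s', (hub a b, s) ∈ l ∧ (hub a b, s') ∈ l' := by
  obtain ⟨B, s, hs, hB, hBq⟩ := crosses_column hl hqn hpq
  rcases hq with hq | rfl
  · exact ⟨q, B, s, _, hs, (climbs_column hl' hq).1 B hB hBq⟩
  · obtain ⟨B', s', hs', hB', hB'q⟩ := crosses_column hl' hqn (le_refl 2)
    obtain rfl : B = 1 := by omega
    obtain rfl : B' = 1 := by omega
    exact ⟨2, 1, s, s', hs, hs'⟩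

theorem journeys_share_hub (J J' : (graph n).Journey src dst) :
    ∃ a b s s', (hub a b, s) ∈ J.contacts ∧ (hub a b, s') ∈ J'.contacts := by
  obtain ⟨p, t, l, hJ, hl, -, hpn, hp⟩ := route_from_src J.route
  obtain ⟨q, t', l', hJ', hl', -, hqn, hq⟩ := route_from_src J'.route
  rw [hJ, hJ']
  rcases le_total p q with hpq | hqp
  · obtain ⟨a, b, s, s', hs, hs'⟩ := exists_shared_hub hl hl' hpq hqn hq
    exact ⟨a, b, s, s', .tail _ hs, .tail _ hs'⟩
  · obtain ⟨a, b, s', s, hs', hs⟩ := exists_shared_hub hl' hl hqp hpn hp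
    exact ⟨a, b, s, s', .tail _ hs, .tail _ hs'⟩

theorem hub_slot_of_mem {a b s : ℕ} (J : (graph n).Journey src dst)
    (h : (hub a b, s) ∈ J.contacts) :
    s = base a b + 1 ∨ s = base a b + 2 := by
  cases contact_iff.1 (J.valid _ h) <;> simp

theorem not_deltaDisjoint {δ : ℕ} (hδ : 2 ≤ δ) (J J' : (graph n).Journey src dst) :
    ¬ DeltaDisjoint δ J J' := by
  intro hJJ'
  obtain ⟨a, b, s, s', hs, hs'⟩ := journeys_share_hub J J'
  have := hJJ' _ s s' hs hs'
  rcases hub_slot_of_mem J hs with rfl | rfl <;> rcases hub_slot_of_mem J' hs' with rfl | rfl <;>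
    simp [Nat.dist] at this <;> omega

theorem maxFlow_graph {δ : ℕ} (hδ : 2 ≤ δ) (hn : 2 ≤ n) :
    maxFlow (graph n) src dst δ = 1 := by
  obtain ⟨J, -⟩ := exists_lane_journey hn le_rfl (by omega)
  exact maxFlow_eq_one J (not_deltaDisjoint hδ)

def cutSet (k : ℕ) : Finset ((Node × Node) × ℕ) :=
  (Finset.range k).image fun i =>
    (hub (2 * i + 1 + 1) (2 * i + 1), base (2 * i + 1 + 1) (2 * i + 1) + 1)

theorem card_cutSet (k : ℕ) : (cutSet k).card = k := by
  rw [cutSet, Finset.card_image_of_injective _ (fun i j h => by simp at h; omega),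
    Finset.card_range]

theorem route_meets_cutSet {k t : ℕ} {l : List ((Node × Node) × ℕ)}
    (h : (graph (2 * k)).Route dst src t l) :
    ∃ a, Odd a ∧ a < 2 * k ∧ ∃ s, (hub (a + 1) a, s) ∈ l := by
  obtain ⟨p, t', l', rfl, hl, hp, hpn, hstart⟩ := route_from_src h
  obtain ⟨a, rfl⟩ : ∃ a, p = a + 1 := ⟨p - 1, by omega⟩
  rcases Nat.even_or_odd a with heven | hodd
  · have hforced : base (a + 1) 1 + 1 ≤ t' :=
      hstart.resolve_right (by obtain ⟨m, rfl⟩ := heven; omega)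
    have hak : a + 1 < 2 * k := by obtain ⟨m, rfl⟩ := heven; omega
    obtain ⟨s, hs⟩ := (climbs_column hl hforced).2 hak
    exact ⟨a + 1, heven.add_one, hak, s, .tail _ hs⟩
  · refine ⟨a, hodd, by omega, ?_⟩
    rcases hstart with hforced | h2
    · have ha : 1 ≤ a := by obtain ⟨m, rfl⟩ := hodd; omega
      exact ⟨_, .tail _ ((climbs_column hl hforced).1 a ha (by omega))⟩
    · obtain ⟨B, s, hs, hB, hBa⟩ := crosses_column hl hpn le_rfl
      obtain rfl : B = a := by omega
      exact ⟨s, .tail _ hs⟩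

theorem isCutSet_cutSet {k δ : ℕ} (hδ : 2 ≤ δ) :
    IsCutSet (graph (2 * k)) src dst δ (cutSet k) := by
  intro J
  obtain ⟨a, ⟨i, rfl⟩, hak, s, hs⟩ := route_meets_cutSet J.route
  refine ⟨_, hs, _, Finset.mem_image.2 ⟨i, Finset.mem_range.2 (by omega), rfl⟩, rfl, ?_⟩
  rcases hub_slot_of_mem J hs with rfl | rfl <;> constructor <;> dsimp only <;> omega

theorem exists_lane_avoiding (F : Finset ((Node × Node) × ℕ)) (hF : 2 * F.card < n) :
    ∃ p ∈ Finset.Icc 1 n, ∀ f ∈ F, p ∉ edgeLanes f.1 := by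
  have hcard : (F.biUnion fun f => edgeLanes f.1).card < (Finset.Icc 1 n).card := by
    calc (F.biUnion fun f => edgeLanes f.1).card ≤ F.card * 2 :=
          Finset.card_biUnion_le_card_mul _ _ _ fun f _ => card_edgeLanes_le f.1
      _ < (Finset.Icc 1 n).card := by simp; omega
  obtain ⟨p, hp, hpF⟩ := Finset.exists_mem_notMem_of_card_lt_card hcard
  exact ⟨p, hp, fun f hf hpf => hpF (Finset.mem_biUnion.2 ⟨f, hf, hpf⟩)⟩

theorem not_isCutSet {δ : ℕ} (hn : 2 ≤ n) (F : Finset ((Node × Node) × ℕ))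
    (hF : 2 * F.card < n) :
    ¬ IsCutSet (graph n) src dst δ F := by
  obtain ⟨p, hp, hpF⟩ := exists_lane_avoiding F hF
  obtain ⟨J, hJ⟩ := exists_lane_journey hn (Finset.mem_Icc.1 hp).1 (Finset.mem_Icc.1 hp).2
  intro hcut
  obtain ⟨c, hc, f, hf, hcf, -⟩ := hcut J
  exact hpF f hf (hcf ▸ hJ c hc)

theorem minCut_graph {k δ : ℕ} (hδ : 2 ≤ δ) : minCut (graph (2 * k)) src dst δ = k := by
  have hmin : ∀ F, IsCutSet (graph (2 * k)) src dst δ F → (cutSet k).card ≤ F.card := by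
    intro F hF
    by_contra! hlt
    rw [card_cutSet] at hlt
    exact not_isCutSet (by omega) F (by omega) hF
  rw [minCut_eq_card (isCutSet_cutSet hδ) hmin, card_cutSet]

end MengerGap

/-- For every `δ ≥ 2` and `k ≥ 1` there is a time-varying graph with a
source-destination pair whose `MaxFlow_δ` is `1` while `MinCut_δ` is `k`; hence the
gap ratio `MinCut_δ / MaxFlow_δ` can be arbitrarily large. -/
theorem menger_gap_unbounded :
    ∀ δ : ℕ, 2 ≤ δ → ∀ k : ℕ, 1 ≤ k →
      ∃ (V : Type) (G : TVG V) (s d : V),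
        maxFlow G s d δ = 1 ∧ minCut G s d δ = k := by
  intro δ hδ k hk
  exact ⟨_, MengerGap.graph (2 * k), .src, .dst,
    MengerGap.maxFlow_graph hδ (by omega), MengerGap.minCut_graph hδ⟩
end

section
/- Any failure disabling a single edge for δ consecutive time slots can disrupt at most one journey from any given collection of pairwise δ-disjoint journeys; hence if there exist n+1 pairwise δ-disjoint s-d journeys, then after any n failures, each disabling one edge for at most δ consecutive time slots, d remains reachable from s, i.e. the pair (s,d) is (n,δ)-survivable. -/
variable {V : Type}

/-- A single failure disabling one edge for at most `δ` consecutive slots disrupts at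
most one journey of any pairwise `δ`-disjoint collection; hence `n + 1` pairwise
`δ`-disjoint `s`-`d` journeys make `(s,d)` `(n,δ)`-survivable. -/
theorem disjoint_journeys_survivability (G : TVG V) (s d : V) (n δ : ℕ) :
    (∀ (m : ℕ) (Js : Fin m → G.Journey s d),
      (∀ i j, i ≠ j → DeltaDisjoint δ (Js i) (Js j)) →
      ∀ (e : V × V) (t₀ dur : ℕ), dur ≤ δ →
        {i : Fin m | ∃ c ∈ (Js i).contacts, Kills e t₀ dur c}.Subsingleton) ∧
    (HasDisjointJourneys G s d δ (n + 1) → Survivable G s d n δ) := by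
  classical
  have key : ∀ (m : ℕ) (Js : Fin m → G.Journey s d),
      (∀ i j, i ≠ j → DeltaDisjoint δ (Js i) (Js j)) →
      ∀ (e : V × V) (t₀ dur : ℕ), dur ≤ δ →
        {i : Fin m | ∃ c ∈ (Js i).contacts, Kills e t₀ dur c}.Subsingleton := by
    intro m Js hdisj e t₀ dur hdur i hi j hj
    by_contra hij
    obtain ⟨c₁, hc₁, hk₁⟩ := hi
    obtain ⟨c₂, hc₂, hk₂⟩ := hj
    have h1 : (Js i).uses e c₁.2 := by
      unfold TVG.Journey.uses; rw [← hk₁.1, Prod.mk.eta]; exact hc₁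
    have h2 : (Js j).uses e c₂.2 := by
      unfold TVG.Journey.uses; rw [← hk₂.1, Prod.mk.eta]; exact hc₂
    have := hdisj i j hij e c₁.2 c₂.2 h1 h2
    have h3 := hk₁.2
    have h4 := hk₂.2
    simp only [Nat.dist] at this
    omega
  refine ⟨key, ?_⟩
  rintro ⟨Js, hJs⟩ F hF hdur
  set D : Finset (Fin (n + 1)) :=
    Finset.univ.filter (fun i => ∃ c ∈ (Js i).contacts, ∃ f ∈ F, Kills f.1 f.2.1 f.2.2 c)
    with hD
  have hsub : D ⊆ F.biUnion (fun f =>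
      Finset.univ.filter (fun i => ∃ c ∈ (Js i).contacts, Kills f.1 f.2.1 f.2.2 c)) := by
    intro i hi
    simp only [hD, Finset.mem_filter, Finset.mem_univ, true_and] at hi
    obtain ⟨c, hc, f, hf, hk⟩ := hi
    exact Finset.mem_biUnion.2 ⟨f, hf, by
      simp only [Finset.mem_filter, Finset.mem_univ, true_and]; exact ⟨c, hc, hk⟩⟩
  have hcard : D.card ≤ F.card := by
    calc D.card ≤ _ := Finset.card_le_card hsub
    _ ≤ ∑ f ∈ F, (Finset.univ.filter
        (fun i => ∃ c ∈ (Js i).contacts, Kills f.1 f.2.1 f.2.2 c)).card :=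
      Finset.card_biUnion_le
    _ ≤ ∑ _f ∈ F, 1 := by
      refine Finset.sum_le_sum fun f hf => ?_
      refine Finset.card_le_one.2 fun a ha b hb => ?_
      simp only [Finset.mem_filter, Finset.mem_univ, true_and] at ha hb
      exact key (n + 1) Js hJs f.1 f.2.1 f.2.2 (hdur f hf) ha hb
    _ = F.card := by simp
  have hne : Dᶜ.Nonempty := by
    rw [← Finset.card_pos, Finset.card_compl, Fintype.card_fin]
    omega
  obtain ⟨i, hi⟩ := hne
  refine ⟨Js i, fun c hc f hf hk => ?_⟩
  simp only [Finset.mem_compl, hD, Finset.mem_filter, Finset.mem_univ, true_and] at hi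
  exact hi ⟨c, hc, f, hf, hk⟩
end

section
/- Each journey J output by the greedy algorithm for δ-MAXFLOW interferes with at most 2k journeys of any fixed collection of pairwise δ-disjoint journeys, where k is the number of contacts of J; more precisely, a journey with k contacts has each contact interfering with at most 2 journeys of any δ-disjoint collection, so J interferes with at most 2k journeys of the collection. -/
variable {V : Type}

/-- `(e,t)` is an interfering contact of journey `J`: `J` uses edge `e` at some slot
`t'` with `|t - t'| < δ`. -/
def Interferes {G : TVG V} {s d : V} (δ : ℕ) (J : G.Journey s d)
    (c : (V × V) × ℕ) : Prop :=
  ∃ t', J.uses c.1 t' ∧ Nat.dist c.2 t' < δ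

/-! Three slots within distance `δ` of a common slot `t` span less than `2δ`, so two of them
are closer than `δ`. Uses of one edge by distinct journeys
of a `δ`-disjoint collection are at least `δ` apart, so at most two journeys of the
collection interfere with any contact; a union bound over the contacts of `J` gives `2k`. -/

theorem Nat.dist_lt_of_three_dist_lt {δ t a b c : ℕ} (ha : Nat.dist t a < δ)
    (hb : Nat.dist t b < δ) (hc : Nat.dist t c < δ) :
    Nat.dist a b < δ ∨ Nat.dist a c < δ ∨ Nat.dist b c < δ := by
  simp only [Nat.dist] at *
  omega

theorem Finset.card_filter_exists_mem_le {ι α : Type*} [Fintype ι]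
    (P : ι → α → Prop) [∀ i c, Decidable (P i c)] (l : List α) (b : ℕ)
    (hb : ∀ c, (univ.filter fun i => P i c).card ≤ b) :
    (univ.filter fun i => ∃ c ∈ l, P i c).card ≤ b * l.length := by
  classical
  calc (univ.filter fun i => ∃ c ∈ l, P i c).card
      ≤ (l.toFinset.biUnion fun c => univ.filter fun i => P i c).card := by
        refine card_le_card fun i hi => ?_
        simp only [mem_filter, mem_univ, true_and, mem_biUnion, List.mem_toFinset] at hi ⊢
        exact hi
    _ ≤ ∑ c ∈ l.toFinset, (univ.filter fun i => P i c).card := card_biUnion_le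
    _ ≤ ∑ _c ∈ l.toFinset, b := sum_le_sum fun c _ => hb c
    _ = b * l.toFinset.card := by rw [sum_const, smul_eq_mul, mul_comm]
    _ ≤ b * l.length := Nat.mul_le_mul_left b l.toFinset_card_le

open Classical in
theorem card_filter_interferes_le_two {G : TVG V} {s d : V} {δ m : ℕ}
    {Js : Fin m → G.Journey s d} (hdisj : ∀ i j, i ≠ j → DeltaDisjoint δ (Js i) (Js j))
    (c : (V × V) × ℕ) :
    (Finset.univ.filter fun i : Fin m => Interferes δ (Js i) c).card ≤ 2 := by
  by_contra! h
  obtain ⟨i, hi, j, hj, k, hk, hij, hik, hjk⟩ := Finset.two_lt_card.mp h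
  simp only [Finset.mem_filter, Finset.mem_univ, true_and] at hi hj hk
  obtain ⟨ti, hti, dti⟩ := hi
  obtain ⟨tj, htj, dtj⟩ := hj
  obtain ⟨tk, htk, dtk⟩ := hk
  rcases Nat.dist_lt_of_three_dist_lt dti dtj dtk with h | h | h
  · exact h.not_ge (hdisj i j hij c.1 ti tj hti htj)
  · exact h.not_ge (hdisj i k hik c.1 ti tk hti htk)
  · exact h.not_ge (hdisj j k hjk c.1 tj tk htj htk)

open Classical in
theorem interference_bound_general (G : TVG V) (s d : V) (δ m : ℕ)
    (Js : Fin m → G.Journey s d)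
    (hdisj : ∀ i j, i ≠ j → DeltaDisjoint δ (Js i) (Js j))
    (J : G.Journey s d) :
    (∀ c : (V × V) × ℕ,
      (Finset.univ.filter fun i : Fin m => Interferes δ (Js i) c).card ≤ 2) ∧
    (Finset.univ.filter fun i : Fin m =>
        ∃ c ∈ J.contacts, Interferes δ (Js i) c).card ≤ 2 * J.contacts.length :=
  ⟨card_filter_interferes_le_two hdisj,
    Finset.card_filter_exists_mem_le _ J.contacts 2 (card_filter_interferes_le_two hdisj)⟩

open Classical in
/-- Each contact interferes with at most `2` journeys of any pairwise `δ`-disjoint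
collection; hence a journey with `k` contacts interferes with at most `2k` journeys
of the collection. -/
theorem interference_bound (G : TVG V) (s d : V) (δ m : ℕ) (hδ : 1 ≤ δ)
    (Js : Fin m → G.Journey s d)
    (hdisj : ∀ i j, i ≠ j → DeltaDisjoint δ (Js i) (Js j))
    (J : G.Journey s d) :
    (∀ c : (V × V) × ℕ,
      (Finset.univ.filter fun i : Fin m => Interferes δ (Js i) c).card ≤ 2) ∧
    (Finset.univ.filter fun i : Fin m =>
        ∃ c ∈ J.contacts, Interferes δ (Js i) c).card ≤ 2 * J.contacts.length :=
  interference_bound_general G s d δ m Js hdisj J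
end

section
/- The greedy algorithm for finding δ-disjoint journeys achieves an O(√(|E|·(T/δ+1)))-approximation of MaxFlow_δ; specifically if the greedy output has m≥1 journeys and the optimum is m*, then m* < (3·√(|E|(T/δ+1)) + 2)·m. -/
variable {V : Type}

/-!
Charge each journey `K` of a `δ`-disjoint family to the first greedy journey `J` it interferes
with; one exists because the greedy run stopped. Two journeys charged to `J` cannot interfere with
the same contact of `J` from the same side, so at most `2|J|` journeys are charged to `J`. Each of
them avoids the earlier greedy journeys, so by the greedy choice of `J` (applied to `K` with its
repeated edges shortcut) it uses at least `|J|` distinct edges, while an edge carries at most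
`T/δ + 1` journeys of the family (their slots on it lie in distinct blocks of length `δ`).
Double counting gives `#charged · |J| ≤ |E|(T/δ + 1) =: L²`, so according as `|J| ≤ L` or
`|J| > L` one of the two bounds caps the charge of `J` by `2L`, and `m* ≤ 2Lm`.
-/

theorem List.exists_eq_append_cons_append_cons_of_not_nodup_map {α β : Type*} (f : α → β)
    {l : List α} (h : ¬ (l.map f).Nodup) :
    ∃ l₁ a l₂ b l₃, l = l₁ ++ a :: (l₂ ++ b :: l₃) ∧ f a = f b := by
  induction l with
  | nil => simp at h
  | cons c t ih =>
    by_cases hc : f c ∈ t.map f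
    · obtain ⟨b, hb, hcb⟩ := List.mem_map.mp hc
      obtain ⟨l₂, l₃, rfl⟩ := List.append_of_mem hb
      exact ⟨[], c, l₂, b, l₃, rfl, hcb.symm⟩
    · obtain ⟨l₁, a, l₂, b, l₃, rfl, hab⟩ := ih fun hn => h (List.nodup_cons.mpr ⟨hc, hn⟩)
      exact ⟨c :: l₁, a, l₂, b, l₃, rfl, hab⟩

theorem List.IsChain.shortcut {α : Type*} {R : α → α → Prop} {l₁ l₂ l₃ : List α} {a b : α}
    (h : List.IsChain R (l₁ ++ a :: (l₂ ++ b :: l₃))) (hab : ∀ x, R b x → R a x) :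
    List.IsChain R (l₁ ++ a :: l₃) := by
  obtain ⟨h₁, h₂, hlink⟩ := List.isChain_append.mp h
  have hb : List.IsChain R (b :: l₃) :=
    (List.isChain_append.mp (List.isChain_cons.mp h₂).2).2.1
  refine List.isChain_append.mpr ⟨h₁, List.isChain_cons.mpr ⟨fun y hy => hab y ?_, hb.tail⟩,
    by simpa using hlink⟩
  exact (List.isChain_cons.mp hb).1 y hy

theorem List.head_append_cons_congr {α : Type*} (l₁ : List α) (a : α) {l l' : List α}
    (h : l₁ ++ a :: l ≠ []) (h' : l₁ ++ a :: l' ≠ []) :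
    (l₁ ++ a :: l).head h = (l₁ ++ a :: l').head h' := by
  cases l₁ <;> simp

theorem List.getLast_append_cons_shortcut {α β : Type*} (f : α → β) {l₁ l₂ l₃ : List α}
    {a b : α} (hab : f a = f b) (h : l₁ ++ a :: l₃ ≠ []) (h' : l₁ ++ a :: (l₂ ++ b :: l₃) ≠ []) :
    f ((l₁ ++ a :: l₃).getLast h) = f ((l₁ ++ a :: (l₂ ++ b :: l₃)).getLast h') := by
  rw [List.getLast_append_of_ne_nil _ (List.cons_ne_nil _ _),
    List.getLast_append_of_ne_nil _ (List.cons_ne_nil _ _)]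
  cases l₃ <;> simp [hab]

namespace TVG.Journey

variable {G : TVG V} {s d : V}

theorem pairwise_time_lt (K : G.Journey s d) : K.contacts.Pairwise fun a b => a.2 < b.2 :=
  List.pairwise_map.mp ((List.isChain_map _).mpr (K.chain.imp fun _ _ h => h.2)).pairwise

theorem exists_contacts_eq_shortcut (K : G.Journey s d)
    {l₁ l₂ l₃ : List ((V × V) × ℕ)} {a b : (V × V) × ℕ}
    (hK : K.contacts = l₁ ++ a :: (l₂ ++ b :: l₃)) (hab : a.1 = b.1) :
    ∃ K' : G.Journey s d, K'.contacts = l₁ ++ a :: l₃ := by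
  have hab_time : a.2 < b.2 := by
    have := K.pairwise_time_lt
    rw [hK, List.pairwise_append, List.pairwise_cons] at this
    exact this.2.1.1 b (by simp)
  obtain ⟨_, hne, hstarts, hends, hvalid, hchain⟩ := K
  subst hK
  refine ⟨⟨l₁ ++ a :: l₃, by simp, ?_, ?_, fun c hc => hvalid c ?_, ?_⟩, rfl⟩
  · rwa [List.head_append_cons_congr]
  · exact (List.getLast_append_cons_shortcut (fun c : (V × V) × ℕ => c.1.2)
      (congrArg Prod.snd hab) _ _).trans hends
  · have hsub : List.Sublist l₃ (l₂ ++ b :: l₃) :=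
      (List.sublist_cons_self b l₃).trans (List.sublist_append_right l₂ _)
    exact (hsub.cons_cons a).append_left l₁ |>.subset hc
  · exact hchain.shortcut fun x hx => ⟨hab ▸ hx.1, hab_time.trans hx.2⟩

def edges [DecidableEq V] (J : G.Journey s d) : Finset (V × V) :=
  (J.contacts.map Prod.fst).toFinset

theorem mem_edges [DecidableEq V] {J : G.Journey s d} {e : V × V} :
    e ∈ J.edges ↔ ∃ t, J.uses e t := by
  simp [edges, uses]

theorem edges_subset [DecidableEq V] (J : G.Journey s d) : J.edges ⊆ G.E := by
  intro e he
  obtain ⟨t, ht⟩ := mem_edges.mp he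
  exact (J.valid _ ht).1

theorem edges_mono [DecidableEq V] {J K : G.Journey s d} (h : J.contacts ⊆ K.contacts) :
    J.edges ⊆ K.edges := by
  intro e he
  obtain ⟨t, ht⟩ := mem_edges.mp he
  exact mem_edges.mpr ⟨t, h ht⟩

theorem exists_subset_length_le_card_edges [DecidableEq V] (K : G.Journey s d) :
    ∃ K' : G.Journey s d, K'.contacts ⊆ K.contacts ∧ K'.contacts.length ≤ K.edges.card := by
  induction hn : K.contacts.length using Nat.strong_induction_on generalizing K with
  | _ n ih =>
    by_cases hnd : (K.contacts.map Prod.fst).Nodup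
    · refine ⟨K, List.Subset.refl _, ?_⟩
      rw [edges, List.toFinset_card_of_nodup hnd, List.length_map]
    obtain ⟨l₁, a, l₂, b, l₃, hK, hab⟩ :=
      List.exists_eq_append_cons_append_cons_of_not_nodup_map Prod.fst hnd
    obtain ⟨K₁, hK₁⟩ := K.exists_contacts_eq_shortcut hK hab
    have hsub : K₁.contacts ⊆ K.contacts := by
      intro c
      simp only [hK₁, hK, List.mem_append, List.mem_cons]
      tauto
    have hlen : K₁.contacts.length < n := by
      simp only [← hn, hK₁, hK, List.length_append, List.length_cons]
      omega
    obtain ⟨K', hK'sub, hK'len⟩ := ih _ hlen K₁ rfl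
    exact ⟨K', List.Subset.trans hK'sub hsub,
      hK'len.trans (Finset.card_le_card (edges_mono hsub))⟩

theorem length_le_card_edges_of_forall_length_le [DecidableEq V] {J K : G.Journey s d}
    {P : (V × V) × ℕ → Prop}
    (hJ : ∀ J' : G.Journey s d, (∀ c ∈ J'.contacts, ¬ P c) → J.contacts.length ≤ J'.contacts.length)
    (hK : ∀ c ∈ K.contacts, ¬ P c) : J.contacts.length ≤ K.edges.card := by
  obtain ⟨K', hsub, hlen⟩ := K.exists_subset_length_le_card_edges
  exact (hJ K' fun c hc => hK c (hsub hc)).trans hlen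

end TVG.Journey

theorem le_two_mul_of_le_two_mul_of_mul_le_sq {a b L : ℝ} (hL : 0 ≤ L) (h₁ : a ≤ 2 * b)
    (h₂ : a * b ≤ L ^ 2) : a ≤ 2 * L := by
  by_contra! h
  nlinarith

theorem Fintype.card_le_sum_card_of_first_mem {ι κ : Type*} [Fintype ι] [Fintype κ]
    [LinearOrder κ] {P : ι → κ → Prop} (S : κ → Finset ι) (h : ∀ k, ∃ i, P k i)
    (hS : ∀ k i, P k i → (∀ j < i, ¬ P k j) → k ∈ S i) :
    Fintype.card ι ≤ ∑ i, (S i).card := by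
  classical
  have hsub : (Finset.univ : Finset ι) ⊆ Finset.univ.biUnion S := fun k _ => by
    obtain ⟨i, hi, hfirst⟩ := wellFounded_lt.has_min {i | P k i} (h k)
    exact Finset.mem_biUnion.mpr ⟨i, Finset.mem_univ _, hS k i hi fun j hj hj' => hfirst j hj' hj⟩
  exact (Finset.card_le_card hsub).trans Finset.card_biUnion_le

section DisjointFamily

variable {G : TVG V} {s d : V} {ι : Type*} {δ : ℕ} {Ks : ι → G.Journey s d}

theorem card_le_two_mul_length_of_interferes
    (hKs : Pairwise fun i j => DeltaDisjoint δ (Ks i) (Ks j)) (J : G.Journey s d) (S : Finset ι)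
    (hS : ∀ k ∈ S, ∃ c ∈ (Ks k).contacts, Interferes δ J c) :
    S.card ≤ 2 * J.contacts.length := by
  classical
  have : Nonempty ((V × V) × ℕ) := ⟨J.contacts.head J.ne⟩
  simp only [Interferes] at hS
  choose! c hc t ht hdist using hS
  have hmaps : Set.MapsTo (fun k => (((c k).1, t k), decide ((c k).2 ≤ t k))) S
      (J.contacts.toFinset ×ˢ (Finset.univ : Finset Bool) : Finset _) := fun k hk =>
    Finset.mem_product.mpr ⟨List.mem_toFinset.mpr (ht k hk), Finset.mem_univ _⟩
  have hinj : Set.InjOn (fun k => (((c k).1, t k), decide ((c k).2 ≤ t k))) S := by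
    intro k hk k' hk' heq
    by_contra hne
    simp only [Prod.mk.injEq, decide_eq_decide] at heq
    obtain ⟨⟨he, htt⟩, hside⟩ := heq
    have hsep := hKs hne (c k).1 (c k).2 (c k').2 (hc k hk) (he ▸ hc k' hk')
    have h₁ := hdist k hk
    have h₂ := hdist k' hk'
    simp only [Nat.dist] at hsep h₁ h₂
    rw [← htt] at h₂ hside
    by_cases hk_le : (c k).2 ≤ t k
    · have := hside.mp hk_le; omega
    · have := mt hside.mpr hk_le; omega
  calc S.card ≤ (J.contacts.toFinset ×ˢ (Finset.univ : Finset Bool)).card :=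
        Finset.card_le_card_of_injOn _ hmaps hinj
    _ ≤ 2 * J.contacts.length := by
        rw [Finset.card_product, Finset.card_univ, Fintype.card_bool, mul_comm]
        exact Nat.mul_le_mul_left 2 (List.toFinset_card_le _)

variable [DecidableEq V]

theorem card_filter_mem_edges_le (hKs : Pairwise fun i j => DeltaDisjoint δ (Ks i) (Ks j))
    (hδ : 0 < δ) (S : Finset ι) (e : V × V) :
    (S.filter fun k => e ∈ (Ks k).edges).card ≤ G.T / δ + 1 := by
  have hS : ∀ k ∈ S.filter fun k => e ∈ (Ks k).edges, ∃ t, (Ks k).uses e t := fun k hk =>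
    TVG.Journey.mem_edges.mp (Finset.mem_filter.mp hk).2
  choose! t ht using hS
  have hmaps : Set.MapsTo (fun k => t k / δ) (S.filter fun k => e ∈ (Ks k).edges)
      (Finset.range (G.T / δ + 1)) := fun k hk => by
    simpa [Nat.lt_succ_iff] using Nat.div_le_div_right (((Ks k).valid _ (ht k hk)).2.2.1)
  have hinj : Set.InjOn (fun k => t k / δ) (S.filter fun k => e ∈ (Ks k).edges) := by
    intro k hk k' hk' heq
    by_contra hne
    have hsep := hKs hne e _ _ (ht k hk) (ht k' hk')
    have h₁ := Nat.div_add_mod (t k) δ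
    have h₂ := Nat.div_add_mod (t k') δ
    have h₃ := Nat.mod_lt (t k) hδ
    have h₄ := Nat.mod_lt (t k') hδ
    simp only at heq
    simp only [Nat.dist] at hsep
    rw [heq] at h₁
    omega
  simpa using Finset.card_le_card_of_injOn _ hmaps hinj

theorem card_mul_le_card_edges_mul (hKs : Pairwise fun i j => DeltaDisjoint δ (Ks i) (Ks j))
    (hδ : 0 < δ) (S : Finset ι) {n : ℕ} (hn : ∀ k ∈ S, n ≤ (Ks k).edges.card) :
    S.card * n ≤ G.E.card * (G.T / δ + 1) := by
  refine Finset.card_mul_le_card_mul (fun k e => e ∈ (Ks k).edges) (fun k hk => ?_)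
    fun e _ => card_filter_mem_edges_le hKs hδ S e
  rw [Finset.bipartiteAbove, Finset.filter_mem_eq_inter,
    Finset.inter_eq_right.mpr (Ks k).edges_subset]
  exact hn k hk

theorem card_le_two_mul_sqrt_of_forall_length_le
    (hKs : Pairwise fun i j => DeltaDisjoint δ (Ks i) (Ks j)) (hδ : 0 < δ) {J : G.Journey s d}
    {P : (V × V) × ℕ → Prop}
    (hJ : ∀ J' : G.Journey s d, (∀ c ∈ J'.contacts, ¬ P c) → J.contacts.length ≤ J'.contacts.length)
    (S : Finset ι)
    (hS : ∀ k ∈ S, (∃ c ∈ (Ks k).contacts, Interferes δ J c) ∧ ∀ c ∈ (Ks k).contacts, ¬ P c) :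
    (S.card : ℝ) ≤ 2 * Real.sqrt ((G.E.card : ℝ) * ((G.T : ℝ) / δ + 1)) := by
  have hcontacts := card_le_two_mul_length_of_interferes hKs J S fun k hk => (hS k hk).1
  have hedges := card_mul_le_card_edges_mul hKs hδ S fun k hk =>
    TVG.Journey.length_le_card_edges_of_forall_length_le hJ (hS k hk).2
  refine le_two_mul_of_le_two_mul_of_mul_le_sq (b := J.contacts.length) (Real.sqrt_nonneg _)
    (by exact_mod_cast hcontacts) ?_
  calc (S.card : ℝ) * J.contacts.length ≤ G.E.card * ((G.T / δ : ℕ) + 1 : ℝ) := by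
        exact_mod_cast hedges
    _ ≤ G.E.card * ((G.T : ℝ) / δ + 1) := by gcongr; exact Nat.cast_div_le
    _ = _ := (Real.sq_sqrt (by positivity)).symm

end DisjointFamily

theorem greedy_approximation_general (G : TVG V) (s d : V) (δ m : ℕ)
    (hδ : 1 ≤ δ) (hm : 1 ≤ m)
    (Js : Fin m → G.Journey s d)
    (hmin : ∀ j : Fin m, ∀ J' : G.Journey s d,
      (∀ i : Fin m, i < j → ∀ c ∈ J'.contacts, ¬ Interferes δ (Js i) c) →
      (Js j).contacts.length ≤ J'.contacts.length)
    (hterm : ∀ J' : G.Journey s d, ∃ i : Fin m, ∃ c ∈ J'.contacts, Interferes δ (Js i) c)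
    (m' : ℕ) (hopt : HasDisjointJourneys G s d δ m') :
    (m' : ℝ) < (3 * Real.sqrt ((G.E.card : ℝ) * ((G.T : ℝ) / (δ : ℝ) + 1)) + 2) * m := by
  classical
  obtain ⟨Ks, hKs⟩ := hopt
  set L := Real.sqrt ((G.E.card : ℝ) * ((G.T : ℝ) / (δ : ℝ) + 1))
  let earlier (i : Fin m) (c : (V × V) × ℕ) : Prop := ∃ j < i, Interferes δ (Js j) c
  let charged (i : Fin m) : Finset (Fin m') :=
    {k | (∃ c ∈ (Ks k).contacts, Interferes δ (Js i) c) ∧ ∀ c ∈ (Ks k).contacts, ¬ earlier i c}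
  have hcover : m' ≤ ∑ i, (charged i).card := by
    simpa using Fintype.card_le_sum_card_of_first_mem charged (fun k => hterm (Ks k))
      fun k i hi hfirst => Finset.mem_filter.mpr
        ⟨Finset.mem_univ _, hi, fun c hc ⟨j, hj, hint⟩ => hfirst j hj ⟨c, hc, hint⟩⟩
  have hcharged (i : Fin m) : ((charged i).card : ℝ) ≤ 2 * L :=
    card_le_two_mul_sqrt_of_forall_length_le hKs hδ
      (fun J' hJ' => hmin i J' fun j hj c hc hint => hJ' c hc ⟨j, hj, hint⟩) (charged i)
      fun k hk => (Finset.mem_filter.mp hk).2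
  have hm' : (1 : ℝ) ≤ m := by exact_mod_cast hm
  have hL : 0 ≤ L := Real.sqrt_nonneg _
  calc (m' : ℝ) ≤ ∑ i, ((charged i).card : ℝ) := by exact_mod_cast hcover
    _ ≤ ∑ _i : Fin m, 2 * L := Finset.sum_le_sum fun i _ => hcharged i
    _ = 2 * L * m := by simp [mul_comm]
    _ < (3 * L + 2) * m := by nlinarith

/-- Approximation guarantee of the greedy algorithm for `δ`-MAXFLOW: if the greedy
algorithm (always picking an `s`-`d` journey with the fewest contacts among those
avoiding the interfering contacts of the previously chosen journeys, until no such
journey remains) outputs `m ≥ 1` journeys, then every number `m'` of pairwise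
`δ`-disjoint journeys satisfies `m' < (3·√(|E|(T/δ+1)) + 2)·m`. -/
theorem greedy_approximation (G : TVG V) (s d : V) (δ m : ℕ)
    (hδ : 1 ≤ δ) (hδT : δ ≤ G.T) (hm : 1 ≤ m)
    (Js : Fin m → G.Journey s d)
    (hvalid : ∀ i j : Fin m, i < j → ∀ c ∈ (Js j).contacts, ¬ Interferes δ (Js i) c)
    (hmin : ∀ j : Fin m, ∀ J' : G.Journey s d,
      (∀ i : Fin m, i < j → ∀ c ∈ J'.contacts, ¬ Interferes δ (Js i) c) →
      (Js j).contacts.length ≤ J'.contacts.length)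
    (hterm : ∀ J' : G.Journey s d, ∃ i : Fin m, ∃ c ∈ J'.contacts, Interferes δ (Js i) c)
    (m' : ℕ) (hopt : HasDisjointJourneys G s d δ m') :
    (m' : ℝ) < (3 * Real.sqrt ((G.E.card : ℝ) * ((G.T : ℝ) / (δ : ℝ) + 1)) + 2) * m :=
  greedy_approximation_general G s d δ m hδ hm Js hmin hterm m' hopt
end

section
/- Let C be any set of contacts in a time-varying graph, and assign each contact (e,t) the weight ω_{e,t} = 1/K_{e,t}, where K_{e,t} is the maximum number of contacts of C on edge e contained in any window of δ consecutive slots containing t. Then the minimum number of δ-removals needed to cover all contacts of C, denoted |Cover_δ(C)|, satisfies Σ_{(e,t)∈C} ω_{e,t} ≤ |Cover_δ(C)| ≤ δ·Σ_{(e,t)∈C} ω_{e,t}. -/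
/-- `K_{e,t}` relative to a contact set `C`: the maximum number of contacts of `C`
on edge `e` contained in a window of `δ` consecutive slots containing `t`. -/
def windowCount {α : Type} [DecidableEq α] (δ : ℕ) (C : Finset (α × ℕ))
    (e : α) (t : ℕ) : ℕ :=
  (Finset.Icc (t + 1 - δ) t).sup fun w =>
    (C.filter fun c => c.1 = e ∧ w ≤ c.2 ∧ c.2 < w + δ).card

/-- The weight `ω_{e,t} = 1 / K_{e,t}` of a contact. -/
noncomputable def contactWeight {α : Type} [DecidableEq α] (δ : ℕ)
    (C : Finset (α × ℕ)) (c : α × ℕ) : ℝ :=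
  1 / (windowCount δ C c.1 c.2 : ℝ)

/-- `R` is a set of heads of `δ`-removals covering every contact of `C`:
each `(e,t) ∈ C` lies in some window `[r, r + δ - 1]` of a removal of edge `e`. -/
def IsCover {α : Type} (δ : ℕ) (C R : Finset (α × ℕ)) : Prop :=
  ∀ c ∈ C, ∃ r ∈ R, r.1 = c.1 ∧ r.2 ≤ c.2 ∧ c.2 < r.2 + δ

/-- `|Cover_δ(C)|`: the minimum number of `δ`-removals needed to cover `C`. -/
noncomputable def coverNum {α : Type} (δ : ℕ) (C : Finset (α × ℕ)) : ℕ :=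
  sInf {k | ∃ R : Finset (α × ℕ), R.card = k ∧ IsCover δ C R}

/-! The lower bound is a charging argument: in an optimal cover, assign every contact to a
removal covering it. A removal deletes some set `S` of contacts, all lying in one window of
length `δ`, so each of them has `K ≥ #S`, and the weights charged to it sum to at most
`#S · (1 / #S) ≤ 1`. The upper bound compares with the cover by one removal per contact,
using `K ≤ δ`. -/

open Finset

section
variable {α : Type} [DecidableEq α] {δ : ℕ} {C R : Finset (α × ℕ)}

def removedContacts (δ : ℕ) (C : Finset (α × ℕ)) (r : α × ℕ) : Finset (α × ℕ) :=
  C.filter fun c => c.1 = r.1 ∧ r.2 ≤ c.2 ∧ c.2 < r.2 + δ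

lemma card_removedContacts_le (δ : ℕ) (C : Finset (α × ℕ)) (r : α × ℕ) :
    #(removedContacts δ C r) ≤ δ := by
  calc #(removedContacts δ C r) ≤ #(Ico r.2 (r.2 + δ)) := by
        refine card_le_card_of_injOn Prod.snd (fun c hc => ?_) fun a ha b hb hab => ?_
        · simp_all [removedContacts]
        · simp only [removedContacts, coe_filter, Set.mem_ofPred_eq] at ha hb
          exact Prod.ext (ha.2.1.trans hb.2.1.symm) hab
    _ = δ := by simp

lemma windowCount_le (δ : ℕ) (C : Finset (α × ℕ)) (e : α) (t : ℕ) :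
    windowCount δ C e t ≤ δ :=
  Finset.sup_le fun w _ => card_removedContacts_le δ C (e, w)

lemma card_removedContacts_le_windowCount {c r : α × ℕ} (hc : c ∈ removedContacts δ C r) :
    #(removedContacts δ C r) ≤ windowCount δ C c.1 c.2 := by
  obtain ⟨-, he, hr, hlt⟩ := mem_filter.mp hc
  have hw : r.2 ∈ Icc (c.2 + 1 - δ) c.2 := mem_Icc.mpr ⟨by omega, hr⟩
  rw [windowCount, he]
  exact le_sup (f := fun w => #(removedContacts δ C (r.1, w))) hw

lemma one_le_windowCount (hδ : 1 ≤ δ) {c : α × ℕ} (hc : c ∈ C) :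
    1 ≤ windowCount δ C c.1 c.2 := by
  have hself : c ∈ removedContacts δ C c := mem_filter.mpr ⟨hc, rfl, le_rfl, by omega⟩
  exact (one_le_card.mpr ⟨c, hself⟩).trans (card_removedContacts_le_windowCount hself)

lemma sum_contactWeight_removedContacts_le_one (r : α × ℕ) :
    ∑ c ∈ removedContacts δ C r, contactWeight δ C c ≤ 1 := by
  set S := removedContacts δ C r
  have hweight : ∀ c ∈ S, contactWeight δ C c ≤ 1 / (#S : ℝ) := fun c hc =>
    one_div_le_one_div_of_le (by exact_mod_cast card_pos.mpr ⟨c, hc⟩)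
      (by exact_mod_cast card_removedContacts_le_windowCount hc)
  calc ∑ c ∈ S, contactWeight δ C c ≤ #S • (1 / (#S : ℝ)) := sum_le_card_nsmul _ _ _ hweight
    _ ≤ 1 := by
      rw [nsmul_eq_mul, mul_one_div]
      exact div_self_le_one _

lemma sum_contactWeight_le_card_of_isCover (hR : IsCover δ C R) :
    ∑ c ∈ C, contactWeight δ C c ≤ #R := by
  choose! head hhead_mem hhead_edge hhead_le hhead_lt using hR
  have hfiber : ∀ r ∈ R, {c ∈ C | head c = r} ⊆ removedContacts δ C r := by
    intro r _ c hc
    obtain ⟨hcC, rfl⟩ := mem_filter.mp hc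
    exact mem_filter.mpr ⟨hcC, (hhead_edge c hcC).symm, hhead_le c hcC, hhead_lt c hcC⟩
  have hnonneg : ∀ c, 0 ≤ contactWeight δ C c := fun c => by
    unfold contactWeight; positivity
  calc ∑ c ∈ C, contactWeight δ C c
      = ∑ r ∈ R, ∑ c ∈ C with head c = r, contactWeight δ C c :=
        (sum_fiberwise_of_maps_to hhead_mem _).symm
    _ ≤ ∑ r ∈ R, ∑ c ∈ removedContacts δ C r, contactWeight δ C c :=
        sum_le_sum fun r hr => sum_le_sum_of_subset_of_nonneg (hfiber r hr) fun c _ _ => hnonneg c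
    _ ≤ ∑ _r ∈ R, (1 : ℝ) := sum_le_sum fun r _ => sum_contactWeight_removedContacts_le_one r
    _ = #R := by simp

lemma one_le_mul_contactWeight (hδ : 1 ≤ δ) {c : α × ℕ} (hc : c ∈ C) :
    1 ≤ (δ : ℝ) * contactWeight δ C c := by
  have hK : (1 : ℝ) ≤ windowCount δ C c.1 c.2 := by exact_mod_cast one_le_windowCount hδ hc
  rw [contactWeight, mul_one_div, one_le_div (by positivity)]
  exact_mod_cast windowCount_le δ C c.1 c.2

lemma card_le_mul_sum_contactWeight (hδ : 1 ≤ δ) (C : Finset (α × ℕ)) :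
    (#C : ℝ) ≤ δ * ∑ c ∈ C, contactWeight δ C c := by
  rw [mul_sum, card_eq_sum_ones, Nat.cast_sum, Nat.cast_one]
  exact sum_le_sum fun c hc => one_le_mul_contactWeight hδ hc

end

section
variable {α : Type} {δ : ℕ} {C R : Finset (α × ℕ)}

lemma isCover_self (hδ : 1 ≤ δ) (C : Finset (α × ℕ)) : IsCover δ C C :=
  fun c hc => ⟨c, hc, rfl, le_rfl, by omega⟩

lemma coverNum_le_card_of_isCover (hR : IsCover δ C R) : coverNum δ C ≤ #R :=
  Nat.sInf_le ⟨R, rfl, hR⟩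

lemma exists_isCover_card_eq_coverNum (hR : IsCover δ C R) :
    ∃ R' : Finset (α × ℕ), #R' = coverNum δ C ∧ IsCover δ C R' :=
  Nat.sInf_mem (s := {k | ∃ R : Finset (α × ℕ), #R = k ∧ IsCover δ C R}) ⟨#R, R, rfl, hR⟩

end

/-- Sandwich lemma: for any set `C` of contacts, with weights `ω_{e,t} = 1/K_{e,t}`,
`Σ_C ω ≤ |Cover_δ(C)| ≤ δ · Σ_C ω`. -/
theorem cover_sandwich {α : Type} [DecidableEq α] (δ : ℕ) (hδ : 1 ≤ δ)
    (C : Finset (α × ℕ)) :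
    (∑ c ∈ C, contactWeight δ C c) ≤ (coverNum δ C : ℝ) ∧
    (coverNum δ C : ℝ) ≤ (δ : ℝ) * ∑ c ∈ C, contactWeight δ C c := by
  have hself := isCover_self hδ C
  obtain ⟨R, hRcard, hR⟩ := exists_isCover_card_eq_coverNum hself
  refine ⟨?_, ?_⟩
  · rw [← hRcard]
    exact sum_contactWeight_le_card_of_isCover hR
  · calc (coverNum δ C : ℝ) ≤ #C := by exact_mod_cast coverNum_le_card_of_isCover hself
      _ ≤ δ * ∑ c ∈ C, contactWeight δ C c := card_le_mul_sum_contactWeight hδ C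
end
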